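/- arXiv:2408.09747 — 10 statements merged into one kernel-verified Lean document; each statement's English description precedes it below -/
import Mathlib

section
/- Let S be a topological ternary semigroup and ρ a closed congruence on S, and equip S/ρ with the quotient topology induced by the natural map π_ρ : S → S/ρ. Suppose π_ρ × π_ρ × π_ρ : S×S×S → (S/ρ)×(S/ρ)×(S/ρ) is a quotient map, and suppose S and S/ρ are both locally compact. Then S/ρ, with the induced ternary multiplication (aρ)(bρ)(cρ) = (abc)ρ, is a topological ternary semigroup: the induced ternary multiplication is continuous and S/ρ is Hausdorff. -/
open Topology

/-- Let `S` be a topological ternary semigroup, `s` a closed congruence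
on `S`, and equip `S/s` with the quotient topology.  If `π × π × π` is a quotient map
and both `S` and `S/s` are locally compact, then `S/s` with the induced ternary
multiplication is a topological ternary semigroup: the induced multiplication is
continuous and `S/s` is Hausdorff. -/
theorem quotient_is_topological_ternary_semigroup_of_locallyCompact {S : Type*}
    [TopologicalSpace S] [T2Space S] (m : S → S → S → S)
    (hassoc : ∀ a b c d e : S, m (m a b c) d e = m a (m b c d) e ∧
      m a (m b c d) e = m a b (m c d e))
    (hm : Continuous fun p : S × S × S => m p.1 p.2.1 p.2.2)
    (s : Setoid S)
    (hcong : ∀ a b c d e f : S, s.r a b → s.r c d → s.r e f → s.r (m a c e) (m b d f))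
    (hclosed : IsClosed {p : S × S | s.r p.1 p.2})
    (g : Quotient s → Quotient s → Quotient s → Quotient s)
    (hg : ∀ a b c : S, g (Quotient.mk s a) (Quotient.mk s b) (Quotient.mk s c)
      = Quotient.mk s (m a b c))
    (hq : Topology.IsQuotientMap fun p : S × S × S =>
      ((Quotient.mk s p.1, Quotient.mk s p.2.1, Quotient.mk s p.2.2) :
        Quotient s × Quotient s × Quotient s))
    (hlcS : LocallyCompactSpace S) (hlcQ : LocallyCompactSpace (Quotient s)) :
    (Continuous fun p : Quotient s × Quotient s × Quotient s => g p.1 p.2.1 p.2.2) ∧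
      T2Space (Quotient s) := by
  constructor
  · rw [hq.continuous_iff]
    have heq : ((fun p : Quotient s × Quotient s × Quotient s => g p.1 p.2.1 p.2.2) ∘
        fun p : S × S × S =>
          ((Quotient.mk s p.1, Quotient.mk s p.2.1, Quotient.mk s p.2.2) :
            Quotient s × Quotient s × Quotient s)) =
        fun p : S × S × S => Quotient.mk s (m p.1 p.2.1 p.2.2) := by
      funext p; exact hg _ _ _
    rw [heq]
    exact Continuous.comp continuous_quotient_mk' hm
  · rcases isEmpty_or_nonempty S with h | h
    · haveI : IsEmpty (Quotient s) :=
        ⟨fun q => Quotient.ind (motive := fun _ => False) (fun a => h.elim a) q⟩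
      infer_instance
    · haveI : Nonempty (Quotient s) := ⟨Quotient.mk s h.some⟩
      set projQ : Quotient s × Quotient s × Quotient s → Quotient s × Quotient s :=
        fun p => (p.1, p.2.1) with hprojQ
      set projS : S × S × S → S × S := fun p => (p.1, p.2.1) with hprojS
      set pi2 : S × S → Quotient s × Quotient s :=
        fun p => (Quotient.mk s p.1, Quotient.mk s p.2) with hpi2
      have hproj : Topology.IsQuotientMap projQ := by
        have hopen : IsOpenMap projQ := IsOpenMap.prodMap IsOpenMap.id isOpenMap_fst
        have hsurj : Function.Surjective projQ := by
          intro ⟨a, b⟩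
          exact ⟨(a, b, Classical.arbitrary _), rfl⟩
        exact hopen.isQuotientMap
          (continuous_fst.prodMk (continuous_fst.comp continuous_snd)) hsurj
      have hcomp : Topology.IsQuotientMap (pi2 ∘ projS) := by
        have : pi2 ∘ projS = projQ ∘ fun p : S × S × S =>
            ((Quotient.mk s p.1, Quotient.mk s p.2.1, Quotient.mk s p.2.2) :
              Quotient s × Quotient s × Quotient s) := rfl
        rw [this]
        exact hproj.comp hq
      have hq2 : Topology.IsQuotientMap pi2 :=
        Topology.IsQuotientMap.of_comp
          (continuous_fst.prodMk (continuous_fst.comp continuous_snd))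
          ((continuous_quotient_mk'.comp continuous_fst).prodMk
            (continuous_quotient_mk'.comp continuous_snd)) hcomp
      rw [t2_iff_isClosed_diagonal, ← hq2.isClosed_preimage]
      have : pi2 ⁻¹' Set.diagonal (Quotient s) = {p : S × S | s.r p.1 p.2} := by
        ext p
        simp only [hpi2, Set.mem_preimage, Set.mem_diagonal_iff, Set.mem_setOf_eq, Quotient.eq]
      rw [this]
      exact hclosed
end

section
/- Let S be a compact topological ternary semigroup and ρ a closed congruence on S. Then S/ρ, with the induced ternary multiplication (aρ)(bρ)(cρ) = (abc)ρ and the quotient topology, is a compact topological ternary semigroup: S/ρ is compact, Hausdorff, and the induced ternary multiplication is continuous. -/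
/-!
Because `S` is compact and the congruence is closed, the quotient map `π : S → S/ρ` is closed with
compact fibres, i.e. proper. Products of proper maps are proper, so `π × π` sends the closed
relation `ρ` onto a closed set, the diagonal of `S/ρ`, and `π × π × π` is a quotient map, through
which the induced multiplication factors as `π ∘ m`.
-/

open Set Topology

namespace Setoid

variable {X : Type*} [TopologicalSpace X] [CompactSpace X] {s : Setoid X}

theorem isClosedMap_quotient_mk (hs : IsClosed {p : X × X | s.r p.1 p.2}) :
    IsClosedMap (Quotient.mk s) := by
  intro C hC
  -- The saturation of `C` is the projection of `s ∩ (C × X)` along the compact first factor.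
  have hsat : Quotient.mk s ⁻¹' (Quotient.mk s '' C) =
      Prod.snd '' ({p : X × X | s.r p.1 p.2} ∩ C ×ˢ univ) := by
    ext y
    constructor
    · rintro ⟨x, hx, hxy⟩
      exact ⟨(x, y), ⟨Quotient.exact hxy, hx, trivial⟩, rfl⟩
    · rintro ⟨⟨x, y⟩, ⟨hxy, hx, -⟩, rfl⟩
      exact ⟨x, hx, Quotient.sound hxy⟩
  refine isQuotientMap_quotient_mk'.isClosed_preimage.1 ?_
  change IsClosed (Quotient.mk s ⁻¹' _)
  rw [hsat]
  exact isClosedMap_snd_of_compactSpace _ (hs.inter (hC.prod isClosed_univ))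

theorem isProperMap_quotient_mk (hs : IsClosed {p : X × X | s.r p.1 p.2}) :
    IsProperMap (Quotient.mk s) := by
  refine isProperMap_iff_isClosedMap_and_compact_fibers.2
    ⟨continuous_quotient_mk', isClosedMap_quotient_mk hs, ?_⟩
  intro q
  obtain ⟨x, rfl⟩ := Quotient.mk_surjective q
  have hfiber : Quotient.mk s ⁻¹' {Quotient.mk s x} =
      (fun y => (x, y)) ⁻¹' {p | s.r p.1 p.2} := by
    ext y
    exact ⟨fun h => Quotient.exact h.symm, fun h => (Quotient.sound h).symm⟩
  rw [hfiber]
  exact (hs.preimage (Continuous.prodMk_right x)).isCompact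

theorem t2Space_quotient (hs : IsClosed {p : X × X | s.r p.1 p.2}) : T2Space (Quotient s) := by
  have hπ := isProperMap_quotient_mk hs
  have hdiag : diagonal (Quotient s) =
      Prod.map (Quotient.mk s) (Quotient.mk s) '' {p | s.r p.1 p.2} := by
    ext ⟨a, b⟩
    obtain ⟨x, rfl⟩ := Quotient.mk_surjective a
    obtain ⟨y, rfl⟩ := Quotient.mk_surjective b
    constructor
    · exact fun h => ⟨(x, y), Quotient.exact h, rfl⟩
    · rintro ⟨⟨x', y'⟩, hxy, h⟩
      simp only [Prod.map, Prod.mk.injEq] at h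
      simp only [mem_diagonal_iff, ← h.1, ← h.2]
      exact Quotient.sound hxy
  rw [t2_iff_isClosed_diagonal, hdiag]
  exact (hπ.prodMap hπ).isClosedMap _ hs

theorem isQuotientMap_prodMap_quotient_mk₃ (hs : IsClosed {p : X × X | s.r p.1 p.2}) :
    IsQuotientMap (Prod.map (Quotient.mk s) (Prod.map (Quotient.mk s) (Quotient.mk s))) := by
  have hπ := isProperMap_quotient_mk hs
  have hπ₃ := hπ.prodMap (hπ.prodMap hπ)
  exact hπ₃.isClosedMap.isQuotientMap hπ₃.continuous
    (Quotient.mk_surjective.prodMap (Quotient.mk_surjective.prodMap Quotient.mk_surjective))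

end Setoid

theorem quotient_compact_topological_ternary_semigroup_general {S : Type*}
    [TopologicalSpace S] [CompactSpace S] (m : S → S → S → S)
    (hm : Continuous fun p : S × S × S => m p.1 p.2.1 p.2.2)
    (s : Setoid S)
    (hclosed : IsClosed {p : S × S | s.r p.1 p.2})
    (g : Quotient s → Quotient s → Quotient s → Quotient s)
    (hg : ∀ a b c : S, g (Quotient.mk s a) (Quotient.mk s b) (Quotient.mk s c)
      = Quotient.mk s (m a b c)) :
    CompactSpace (Quotient s) ∧ T2Space (Quotient s) ∧
      Continuous fun p : Quotient s × Quotient s × Quotient s => g p.1 p.2.1 p.2.2 := by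
  refine ⟨inferInstance, Setoid.t2Space_quotient hclosed, ?_⟩
  rw [(Setoid.isQuotientMap_prodMap_quotient_mk₃ hclosed).continuous_iff]
  have hlift : (fun p : Quotient s × Quotient s × Quotient s => g p.1 p.2.1 p.2.2) ∘
      Prod.map (Quotient.mk s) (Prod.map (Quotient.mk s) (Quotient.mk s)) =
      Quotient.mk s ∘ fun p : S × S × S => m p.1 p.2.1 p.2.2 := by
    ext ⟨a, b, c⟩
    exact hg a b c
  rw [hlift]
  exact continuous_quotient_mk'.comp hm

/-- Let `S` be a compact topological ternary semigroup and `s` a closed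
congruence on `S`.  Then `S/s` with the induced ternary multiplication and the quotient
topology is a compact topological ternary semigroup: it is compact, Hausdorff, and the
induced ternary multiplication is continuous. -/
theorem quotient_compact_topological_ternary_semigroup {S : Type*}
    [TopologicalSpace S] [T2Space S] [CompactSpace S] (m : S → S → S → S)
    (hassoc : ∀ a b c d e : S, m (m a b c) d e = m a (m b c d) e ∧
      m a (m b c d) e = m a b (m c d e))
    (hm : Continuous fun p : S × S × S => m p.1 p.2.1 p.2.2)
    (s : Setoid S)
    (hcong : ∀ a b c d e f : S, s.r a b → s.r c d → s.r e f → s.r (m a c e) (m b d f))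
    (hclosed : IsClosed {p : S × S | s.r p.1 p.2})
    (g : Quotient s → Quotient s → Quotient s → Quotient s)
    (hg : ∀ a b c : S, g (Quotient.mk s a) (Quotient.mk s b) (Quotient.mk s c)
      = Quotient.mk s (m a b c)) :
    CompactSpace (Quotient s) ∧ T2Space (Quotient s) ∧
      Continuous fun p : Quotient s × Quotient s × Quotient s => g p.1 p.2.1 p.2.2 :=
  quotient_compact_topological_ternary_semigroup_general m hm s hclosed g hg
end

section
/- Let S be a compact topological ternary semigroup, I a closed ideal of S, and ρ₁ = (I×I) ∪ Δ(S), where Δ(S) is the diagonal of S×S. Then S/ρ₁, with the induced ternary multiplication and the quotient topology, is a compact topological ternary semigroup: S/ρ₁ is compact, Hausdorff, and the induced ternary multiplication is continuous. -/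
open Topology

/-- Let `S` be a compact topological ternary semigroup, `I` a closed
ideal of `S`, and `ρ₁ = (I × I) ∪ Δ(S)`.  Then the Rees quotient `S/ρ₁` with the induced
ternary multiplication and the quotient topology is a compact topological ternary
semigroup: it is compact, Hausdorff, and the induced multiplication is continuous. -/
theorem rees_quotient_compact_topological_ternary_semigroup {S : Type*}
    [TopologicalSpace S] [T2Space S] [CompactSpace S] (m : S → S → S → S)
    (hassoc : ∀ a b c d e : S, m (m a b c) d e = m a (m b c d) e ∧
      m a (m b c d) e = m a b (m c d e))
    (hm : Continuous fun p : S × S × S => m p.1 p.2.1 p.2.2)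
    (I : Set S) (hne : I.Nonempty) (hIclosed : IsClosed I)
    (hideal : ∀ a b : S, ∀ x ∈ I, m a b x ∈ I ∧ m a x b ∈ I ∧ m x a b ∈ I)
    (s : Setoid S)
    (hrel : ∀ x y : S, s.r x y ↔ ((x ∈ I ∧ y ∈ I) ∨ x = y))
    (g : Quotient s → Quotient s → Quotient s → Quotient s)
    (hg : ∀ a b c : S, g (Quotient.mk s a) (Quotient.mk s b) (Quotient.mk s c)
      = Quotient.mk s (m a b c)) :
    CompactSpace (Quotient s) ∧ T2Space (Quotient s) ∧
      Continuous fun p : Quotient s × Quotient s × Quotient s => g p.1 p.2.1 p.2.2 := by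
  classical
  have hqm : IsQuotientMap (Quotient.mk s) := isQuotientMap_quotient_mk'
  -- saturation of sets disjoint from I
  have hsat : ∀ U : Set S, (U ∩ I = ∅) →
      Quotient.mk s ⁻¹' (Quotient.mk s '' U) = U := by
    intro U hUI
    ext x
    constructor
    · rintro ⟨u, huU, hu⟩
      rcases (hrel u x).1 (Quotient.exact hu) with ⟨huI, _⟩ | rfl
      · exact absurd (Set.mem_inter huU huI) (by simp [hUI])
      · exact huU
    · exact fun hx => ⟨x, hx, rfl⟩
  -- saturation of sets containing I
  have hsatI : ∀ U : Set S, I ⊆ U →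
      Quotient.mk s ⁻¹' (Quotient.mk s '' U) = U := by
    intro U hIU
    ext x
    constructor
    · rintro ⟨u, huU, hu⟩
      rcases (hrel u x).1 (Quotient.exact hu) with ⟨_, hxI⟩ | rfl
      · exact hIU hxI
      · exact huU
    · exact fun hx => ⟨x, hx, rfl⟩
  have hopen : ∀ U : Set S, IsOpen U →
      Quotient.mk s ⁻¹' (Quotient.mk s '' U) = U → IsOpen (Quotient.mk s '' U) := by
    intro U hU hU2
    rw [← hqm.isOpen_preimage, hU2]
    exact hU
  have hdisj : ∀ U V : Set S, Disjoint U V →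
      Quotient.mk s ⁻¹' (Quotient.mk s '' U) = U →
      Disjoint (Quotient.mk s '' U) (Quotient.mk s '' V) := by
    intro U V hUV hU2
    rw [Set.disjoint_left]
    rintro q ⟨u, huU, rfl⟩ ⟨v, hvV, hv⟩
    have : v ∈ Quotient.mk s ⁻¹' (Quotient.mk s '' U) := ⟨u, huU, hv.symm⟩
    rw [hU2] at this
    exact Set.disjoint_left.1 hUV this hvV
  have hT2 : T2Space (Quotient s) := by
    constructor
    intro q₁ q₂ hq
    obtain ⟨x, rfl⟩ := Quotient.exists_rep q₁
    obtain ⟨y, rfl⟩ := Quotient.exists_rep q₂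
    have hxy : ¬ s.r x y := fun h => hq (Quotient.sound h)
    rw [hrel] at hxy
    push_neg at hxy
    obtain ⟨hnot, hxney⟩ := hxy
    by_cases hxI : x ∈ I
    · -- y ∉ I
      have hyI : y ∉ I := hnot hxI
      obtain ⟨u, v, hu, hv, hIu, hyv, huv⟩ :=
        normal_separation hIclosed isClosed_singleton
          (Set.disjoint_singleton_right.2 hyI)
      refine ⟨Quotient.mk s '' u, Quotient.mk s '' v,
        hopen u hu (hsatI u hIu), hopen v hv (hsat v ?_), ⟨x, hIu hxI, rfl⟩,
        ⟨y, hyv rfl, rfl⟩, hdisj u v huv (hsatI u hIu)⟩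
      exact Set.eq_empty_of_forall_notMem fun z ⟨hzv, hzI⟩ =>
        Set.disjoint_right.1 huv hzv (hIu hzI)
    · by_cases hyI : y ∈ I
      · obtain ⟨u, v, hu, hv, hIu, hxv, huv⟩ :=
          normal_separation hIclosed isClosed_singleton
            (Set.disjoint_singleton_right.2 hxI)
        refine ⟨Quotient.mk s '' v, Quotient.mk s '' u,
          hopen v hv (hsat v ?_), hopen u hu (hsatI u hIu), ⟨x, hxv rfl, rfl⟩,
          ⟨y, hIu hyI, rfl⟩, (hdisj u v huv (hsatI u hIu)).symm⟩
        exact Set.eq_empty_of_forall_notMem fun z ⟨hzv, hzI⟩ =>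
          Set.disjoint_right.1 huv hzv (hIu hzI)
      · -- both outside I
        have hc1 : IsClosed (I ∪ {y}) := hIclosed.union isClosed_singleton
        have hc2 : IsClosed (I ∪ {x}) := hIclosed.union isClosed_singleton
        obtain ⟨a, b, ha, hb, hxa, hIyb, hab⟩ :=
          normal_separation isClosed_singleton hc1
            (by
              rw [Set.disjoint_singleton_left]
              rintro (h | h)
              · exact hxI h
              · exact hxney h)
        obtain ⟨c, d, hc, hd, hyc, hIxd, hcd⟩ :=
          normal_separation isClosed_singleton hc2
            (by
              rw [Set.disjoint_singleton_left]
              rintro (h | h)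
              · exact hyI h
              · exact hxney h.symm)
        set U := a ∩ d with hU
        set V := c ∩ b with hV
        have hUI : U ∩ I = ∅ :=
          Set.eq_empty_of_forall_notMem fun z ⟨⟨hza, _⟩, hzI⟩ =>
            Set.disjoint_left.1 hab hza (hIyb (Or.inl hzI))
        have hVI : V ∩ I = ∅ :=
          Set.eq_empty_of_forall_notMem fun z ⟨⟨hzc, _⟩, hzI⟩ =>
            Set.disjoint_left.1 hcd hzc (hIxd (Or.inl hzI))
        have hUV : Disjoint U V := by
          rw [Set.disjoint_left]
          rintro z ⟨hza, _⟩ ⟨_, hzb⟩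
          exact Set.disjoint_left.1 hab hza hzb
        exact ⟨Quotient.mk s '' U, Quotient.mk s '' V,
          hopen U (ha.inter hd) (hsat U hUI), hopen V (hc.inter hb) (hsat V hVI),
          ⟨x, ⟨hxa rfl, hIxd (Or.inr rfl)⟩, rfl⟩,
          ⟨y, ⟨hyc rfl, hIyb (Or.inr rfl)⟩, rfl⟩,
          hdisj U V hUV (hsat U hUI)⟩
  refine ⟨Quotient.compactSpace, hT2, ?_⟩
  -- continuity via the quotient map S³ → Q³
  have hcont : Continuous (Quotient.mk s) := continuous_quotient_mk'
  set F : S × S × S → Quotient s × Quotient s × Quotient s :=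
    fun p => (Quotient.mk s p.1, Quotient.mk s p.2.1, Quotient.mk s p.2.2) with hF
  have hFsurj : Function.Surjective F := by
    rintro ⟨q₁, q₂, q₃⟩
    obtain ⟨a, rfl⟩ := Quotient.exists_rep q₁
    obtain ⟨b, rfl⟩ := Quotient.exists_rep q₂
    obtain ⟨c, rfl⟩ := Quotient.exists_rep q₃
    exact ⟨(a, b, c), rfl⟩
  have hFcont : Continuous F :=
    (hcont.comp continuous_fst).prodMk
      ((hcont.comp (continuous_fst.comp continuous_snd)).prodMk
        (hcont.comp (continuous_snd.comp continuous_snd)))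
  have hFq : IsQuotientMap F := IsQuotientMap.of_surjective_continuous hFsurj hFcont
  rw [hFq.continuous_iff]
  have : (fun p : Quotient s × Quotient s × Quotient s => g p.1 p.2.1 p.2.2) ∘ F
      = fun p : S × S × S => Quotient.mk s (m p.1 p.2.1 p.2.2) := by
    funext p
    exact hg p.1 p.2.1 p.2.2
  rw [this]
  exact hcont.comp hm
end

section
/- Let S be a topological ternary semigroup whose underlying space is a k_w-space, and let ρ be a closed congruence on S. Then the quotient S/ρ, with the induced ternary multiplication (aρ)(bρ)(cρ) = (abc)ρ and the quotient topology, is a topological ternary semigroup: S/ρ is Hausdorff and the induced ternary multiplication is continuous. -/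
/-- A topological space `X` is a `k_w`-space if it is the union of a countable collection
`{K n}` of compact subsets such that a set `A ⊆ X` is closed whenever `A ∩ K n` is closed
in `K n` (with the subspace topology) for every `n`. -/
def IsKwSpace (X : Type*) [TopologicalSpace X] : Prop :=
  ∃ K : ℕ → Set X, (∀ n, IsCompact (K n)) ∧ (⋃ n, K n) = Set.univ ∧
    ∀ A : Set X, (∀ n, IsClosed (Subtype.val ⁻¹' A : Set (K n))) → IsClosed A

open Set Topology

namespace KwProof

structure Fam (X : Type*) [TopologicalSpace X] (K : ℕ → Set X) : Prop where
  compact : ∀ n, IsCompact (K n)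
  mono : Monotone K
  cover : (⋃ n, K n) = Set.univ
  crit : ∀ A : Set X, (∀ n, IsClosed (A ∩ K n)) → IsClosed A

variable {X Y : Type*} [TopologicalSpace X] [TopologicalSpace Y]

theorem fam_of_isKw [T2Space X] (h : IsKwSpace X) : ∃ K : ℕ → Set X, Fam X K := by
  obtain ⟨K, hcomp, hcov, hcrit⟩ := h
  refine ⟨fun n => ⋃ i ∈ Finset.range (n+1), K i, ?_, ?_, ?_, ?_⟩
  · exact fun n => (Finset.range (n+1)).isCompact_biUnion (fun i _ => hcomp i)
  · intro m n hmn x hx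
    simp only [Set.mem_iUnion, Finset.mem_range] at hx ⊢
    obtain ⟨i, hi, hxi⟩ := hx
    exact ⟨i, by omega, hxi⟩
  · apply Set.eq_univ_of_univ_subset
    rw [← hcov]
    refine Set.iUnion_subset fun n x hx =>
      Set.mem_iUnion.2 ⟨n, Set.mem_biUnion (Finset.self_mem_range_succ n) hx⟩
  · intro A hA
    apply hcrit
    intro n
    have h1 : IsClosed (A ∩ K n) := by
      have he : A ∩ K n = (A ∩ ⋃ i ∈ Finset.range (n+1), K i) ∩ K n := by
        ext x
        simp only [Set.mem_inter_iff, Set.mem_iUnion]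
        exact ⟨fun ⟨h1, h2⟩ => ⟨⟨h1, ⟨n, by simp, h2⟩⟩, h2⟩, fun ⟨⟨h1, _⟩, h2⟩ => ⟨h1, h2⟩⟩
      rw [he]
      exact (hA n).inter (hcomp n).isClosed
    have he2 : (Subtype.val ⁻¹' A : Set (K n)) = Subtype.val ⁻¹' (A ∩ K n) := by
      ext x; simp [x.2]
    rw [he2]
    exact h1.preimage continuous_subtype_val

theorem Fam.shift [T2Space X] {K : ℕ → Set X} (fam : Fam X K) (n₀ : ℕ) :
    Fam X (fun n => K (n₀ + n)) := by
  refine ⟨fun n => fam.compact _, fun m n h => fam.mono (by omega), ?_, ?_⟩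
  · apply Set.eq_univ_of_univ_subset
    rw [← fam.cover]
    exact Set.iUnion_subset fun n x hx => Set.mem_iUnion.2 ⟨n, fam.mono (by omega) hx⟩
  · intro A hA
    apply fam.crit
    intro n
    have : A ∩ K n = (A ∩ K (n₀ + n)) ∩ K n := by
      ext x
      exact ⟨fun ⟨h1, h2⟩ => ⟨⟨h1, fam.mono (by omega) h2⟩, h2⟩, fun ⟨⟨h1, _⟩, h2⟩ => ⟨h1, h2⟩⟩
    rw [this]
    exact (hA n).inter (fam.compact n).isClosed

theorem Fam.augment [T2Space X] {K : ℕ → Set X} (fam : Fam X K) {C : Set X}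
    (hC : IsCompact C) : Fam X (fun n => C ∪ K n) := by
  refine ⟨fun n => hC.union (fam.compact n),
    fun m n h => Set.union_subset_union_right _ (fam.mono h), ?_, ?_⟩
  · apply Set.eq_univ_of_univ_subset
    rw [← fam.cover]
    exact Set.iUnion_subset fun n x hx => Set.mem_iUnion.2 ⟨n, Or.inr hx⟩
  · intro A hA
    apply fam.crit
    intro n
    have : A ∩ K n = (A ∩ (C ∪ K n)) ∩ K n := by
      ext x
      exact ⟨fun ⟨h1, h2⟩ => ⟨⟨h1, Or.inr h2⟩, h2⟩, fun ⟨⟨h1, _⟩, h2⟩ => ⟨h1, h2⟩⟩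
    rw [this]
    exact (hA n).inter (fam.compact n).isClosed

/-- Shrinking lemma: compact `C` inside open `V`, with `L` compact, can be thickened to
an open `W` whose closure meets `L` inside `V`. -/
theorem shrink [T2Space X] {C L V : Set X} (hC : IsCompact C) (hL : IsCompact L)
    (hV : IsOpen V) (hCV : C ⊆ V) :
    ∃ W : Set X, IsOpen W ∧ C ⊆ W ∧ closure W ∩ L ⊆ V := by
  have hd : Disjoint C (L \ V) := by
    rw [Set.disjoint_left]; intro x hx hx'; exact hx'.2 (hCV hx)
  obtain ⟨W, W', hW, hW', hCW, hLW', hdis⟩ :=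
    SeparatedNhds.of_isCompact_isCompact hC (hL.diff hV) hd
  refine ⟨W, hW, hCW, ?_⟩
  intro x ⟨hx1, hx2⟩
  have hcl : closure W ⊆ W'ᶜ :=
    closure_minimal (fun y hy hy' => Set.disjoint_left.1 hdis hy hy') hW'.isClosed_compl
  by_contra hxV
  exact hcl hx1 (hLW' ⟨hx2, hxV⟩)

/-- Union of relatively open pieces along the filtration is open. -/
theorem unionOpen [T2Space X] {K : ℕ → Set X} (fam : Fam X K) {V : ℕ → Set X}
    (hVo : ∀ n, IsOpen (V n)) (hVm : ∀ n, V n ∩ K n ⊆ V (n+1)) :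
    IsOpen (⋃ n, V n ∩ K n) ∧ Monotone (fun n => V n ∩ K n) := by
  have hmonoA : Monotone (fun n => V n ∩ K n) :=
    monotone_nat_of_le_succ fun n =>
      Set.subset_inter (hVm n) (Set.inter_subset_right.trans (fam.mono (Nat.le_succ n)))
  have key : ∀ m, (⋃ n, V n ∩ K n) ∩ K m = (⋃ n, ⋃ (_ : m ≤ n), V n) ∩ K m := by
    intro m
    ext x
    simp only [Set.mem_inter_iff, Set.mem_iUnion]
    constructor
    · rintro ⟨⟨n, hxn⟩, hxm⟩
      have := hmonoA (le_max_left n m) hxn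
      exact ⟨⟨max n m, le_max_right n m, this.1⟩, hxm⟩
    · rintro ⟨⟨n, hmn, hxV⟩, hxm⟩
      exact ⟨⟨n, hxV, fam.mono hmn hxm⟩, hxm⟩
  have hclosed : IsClosed (⋃ n, V n ∩ K n)ᶜ := by
    apply fam.crit
    intro m
    have hWo : IsOpen (⋃ n, ⋃ (_ : m ≤ n), V n) :=
      isOpen_iUnion fun n => isOpen_iUnion fun _ => hVo n
    have he : (⋃ n, V n ∩ K n)ᶜ ∩ K m = (⋃ n, ⋃ (_ : m ≤ n), V n)ᶜ ∩ K m := by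
      have hk := key m
      ext x
      simp only [Set.mem_inter_iff, Set.mem_compl_iff]
      constructor
      · rintro ⟨hx, hm⟩
        refine ⟨fun hW => hx ?_, hm⟩
        have : x ∈ (⋃ n, ⋃ (_ : m ≤ n), V n) ∩ K m := ⟨hW, hm⟩
        rw [← hk] at this; exact this.1
      · rintro ⟨hx, hm⟩
        refine ⟨fun hU => hx ?_, hm⟩
        have : x ∈ (⋃ n, V n ∩ K n) ∩ K m := ⟨hU, hm⟩
        rw [hk] at this; exact this.1
    rw [he]
    exact hWo.isClosed_compl.inter (fam.compact m).isClosed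
  refine ⟨?_, hmonoA⟩
  rw [← compl_compl (⋃ n, V n ∩ K n)]
  exact hclosed.isOpen_compl

/-- Generic Nat recursion with choice, recording invariant and link. -/
theorem natrec_choice {α : Type*} (P : ℕ → α → Prop) (Rl : ℕ → α → α → Prop)
    (h0 : ∃ a, P 0 a) (hstep : ∀ n a, P n a → ∃ b, P (n+1) b ∧ Rl n a b) :
    ∃ f : ℕ → α, (∀ n, P n (f n)) ∧ ∀ n, Rl n (f n) (f (n+1)) := by
  obtain ⟨a0, ha0⟩ := h0
  let g : ∀ n : ℕ, {a : α // P n a} := fun n =>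
    Nat.rec (motive := fun n => {a : α // P n a}) ⟨a0, ha0⟩
      (fun n p => ⟨(hstep n p.1 p.2).choose, (hstep n p.1 p.2).choose_spec.1⟩) n
  refine ⟨fun n => (g n).1, fun n => (g n).2, fun n => ?_⟩
  exact (hstep n (g n).1 (g n).2).choose_spec.2

/-- The product of two `kw`-filtrations is a `kw`-filtration. -/
theorem fam_prod [T2Space X] [T2Space Y] {K : ℕ → Set X} {L : ℕ → Set Y}
    (hX : Fam X K) (hY : Fam Y L) : Fam (X × Y) (fun n => K n ×ˢ L n) := by
  refine ⟨fun n => (hX.compact n).prod (hY.compact n),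
    fun m n h => Set.prod_mono (hX.mono h) (hY.mono h), ?_, ?_⟩
  · apply Set.eq_univ_of_forall
    rintro ⟨x, y⟩
    have hx : x ∈ ⋃ n, K n := hX.cover ▸ Set.mem_univ x
    have hy : y ∈ ⋃ n, L n := hY.cover ▸ Set.mem_univ y
    obtain ⟨n, hn⟩ := Set.mem_iUnion.1 hx
    obtain ⟨m, hm⟩ := Set.mem_iUnion.1 hy
    exact Set.mem_iUnion.2 ⟨max n m,
      ⟨hX.mono (le_max_left n m) hn, hY.mono (le_max_right n m) hm⟩⟩
  · intro C hC
    rw [← compl_compl C]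
    apply IsOpen.isClosed_compl
    rw [isOpen_iff_forall_mem_open]
    rintro ⟨a, b⟩ hab
    -- choose a common starting index containing (a, b)
    obtain ⟨n₀, ha0⟩ := Set.mem_iUnion.1 (hX.cover ▸ Set.mem_univ a)
    obtain ⟨m₀, hb0⟩ := Set.mem_iUnion.1 (hY.cover ▸ Set.mem_univ b)
    set K' : ℕ → Set X := fun n => K (max n₀ m₀ + n) with hK'def
    set L' : ℕ → Set Y := fun n => L (max n₀ m₀ + n) with hL'def
    have famK' : Fam X K' := hX.shift _
    have famL' : Fam Y L' := hY.shift _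
    have ha0' : a ∈ K' 0 := hX.mono (by omega : n₀ ≤ max n₀ m₀ + 0) ha0
    have hb0' : b ∈ L' 0 := hY.mono (by omega : m₀ ≤ max n₀ m₀ + 0) hb0
    have hC' : ∀ n, IsClosed (C ∩ K' n ×ˢ L' n) := fun n => hC _
    -- one construction step
    have stepP : ∀ (j : ℕ) (C' : Set X) (D' : Set Y), IsCompact C' → IsCompact D' →
        (∀ x ∈ C', ∀ y ∈ D', (x, y) ∉ C) →
        ∃ p : Set X × Set Y, IsOpen p.1 ∧ IsOpen p.2 ∧ C' ⊆ p.1 ∧ D' ⊆ p.2 ∧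
          ∀ x ∈ closure (p.1 ∩ K' j), ∀ y ∈ closure (p.2 ∩ L' j), (x, y) ∉ C := by
      intro j C' D' hc hd hdis
      have hsub : C' ×ˢ D' ⊆ (C ∩ K' j ×ˢ L' j)ᶜ := by
        rintro ⟨x, y⟩ ⟨hx, hy⟩ ⟨hxyC, -⟩
        exact hdis x hx y hy hxyC
      obtain ⟨U₁, U₂, hU₁, hU₂, hCU, hDU, hUU⟩ :=
        generalized_tube_lemma hc hd (hC' j).isOpen_compl hsub
      obtain ⟨V, hVo, hCV, hVcl⟩ := shrink hc (famK'.compact j) hU₁ hCU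
      obtain ⟨W, hWo, hDW, hWcl⟩ := shrink hd (famL'.compact j) hU₂ hDU
      refine ⟨(V, W), hVo, hWo, hCV, hDW, ?_⟩
      intro x hx y hy hmem
      have hxK : x ∈ K' j := by
        have := closure_mono (Set.inter_subset_right : V ∩ K' j ⊆ K' j) hx
        rwa [(famK'.compact j).isClosed.closure_eq] at this
      have hyL : y ∈ L' j := by
        have := closure_mono (Set.inter_subset_right : W ∩ L' j ⊆ L' j) hy
        rwa [(famL'.compact j).isClosed.closure_eq] at this
      have hxU : x ∈ U₁ := hVcl ⟨closure_mono Set.inter_subset_left hx, hxK⟩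
      have hyU : y ∈ U₂ := hWcl ⟨closure_mono Set.inter_subset_left hy, hyL⟩
      exact hUU ⟨hxU, hyU⟩ ⟨hmem, hxK, hyL⟩
    -- the recursion
    have hrec := natrec_choice
      (P := fun n (p : Set X × Set Y) => IsOpen p.1 ∧ IsOpen p.2 ∧ a ∈ p.1 ∧ b ∈ p.2 ∧
        ∀ x ∈ closure (p.1 ∩ K' n), ∀ y ∈ closure (p.2 ∩ L' n), (x, y) ∉ C)
      (Rl := fun n p q => closure (p.1 ∩ K' n) ⊆ q.1 ∧ closure (p.2 ∩ L' n) ⊆ q.2)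
      ?_ ?_
    · obtain ⟨f, hInv, hLink⟩ := hrec
      have hVm : ∀ n, (f n).1 ∩ K' n ⊆ (f (n+1)).1 := fun n =>
        subset_closure.trans (hLink n).1
      have hWm : ∀ n, (f n).2 ∩ L' n ⊆ (f (n+1)).2 := fun n =>
        subset_closure.trans (hLink n).2
      obtain ⟨hUo, hUmono⟩ := unionOpen famK' (fun n => (hInv n).1) hVm
      obtain ⟨hWo', hWmono⟩ := unionOpen famL' (fun n => (hInv n).2.1) hWm
      refine ⟨(⋃ n, (f n).1 ∩ K' n) ×ˢ (⋃ n, (f n).2 ∩ L' n), ?_, hUo.prod hWo', ?_, ?_⟩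
      · rintro ⟨x, y⟩ ⟨hx, hy⟩
        obtain ⟨n, hxn⟩ := Set.mem_iUnion.1 hx
        obtain ⟨m, hym⟩ := Set.mem_iUnion.1 hy
        have hxN := hUmono (le_max_left n m) hxn
        have hyN := hWmono (le_max_right n m) hym
        exact (hInv (max n m)).2.2.2.2 x (subset_closure hxN) y (subset_closure hyN)
      · exact Set.mem_iUnion.2 ⟨0, ⟨(hInv 0).2.2.1, ha0'⟩⟩
      · exact Set.mem_iUnion.2 ⟨0, ⟨(hInv 0).2.2.2.1, hb0'⟩⟩
    · -- base case
      obtain ⟨p, h1, h2, h3, h4, h5⟩ := stepP 0 {a} {b} isCompact_singleton isCompact_singleton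
        (by rintro x rfl y rfl; exact hab)
      exact ⟨p, h1, h2, h3 rfl, h4 rfl, h5⟩
    · -- inductive step
      rintro n ⟨V, W⟩ ⟨hVo, hWo, haV, hbW, hdis⟩
      have hC1 : IsCompact (closure (V ∩ K' n)) :=
        (famK'.compact n).of_isClosed_subset isClosed_closure
          (closure_minimal Set.inter_subset_right (famK'.compact n).isClosed)
      have hD1 : IsCompact (closure (W ∩ L' n)) :=
        (famL'.compact n).of_isClosed_subset isClosed_closure
          (closure_minimal Set.inter_subset_right (famL'.compact n).isClosed)
      obtain ⟨p, h1, h2, h3, h4, h5⟩ := stepP (n+1) _ _ hC1 hD1 hdis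
      refine ⟨p, ⟨h1, h2, ?_, ?_, h5⟩, h3, h4⟩
      · exact h3 (subset_closure ⟨haV, famK'.mono (Nat.zero_le n) ha0'⟩)
      · exact h4 (subset_closure ⟨hbW, famL'.mono (Nat.zero_le n) hb0'⟩)

/-- Separation of two non-related points by disjoint saturated open sets. -/
theorem sep [T2Space X] {K : ℕ → Set X} (fam : Fam X K) (s : Setoid X)
    (hcl : IsClosed {p : X × X | s.r p.1 p.2}) {a b : X} (hab : ¬ s.r a b) :
    ∃ U V : Set X, IsOpen U ∧ IsOpen V ∧ a ∈ U ∧ b ∈ V ∧ (∀ x, ¬ (x ∈ U ∧ x ∈ V)) ∧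
      (∀ x ∈ U, ∀ y, s.r x y → y ∈ U) ∧ (∀ x ∈ V, ∀ y, s.r x y → y ∈ V) := by
  set K' : ℕ → Set X := fun n => {a, b} ∪ K n with hK'def
  have fam' : Fam X K' :=
    fam.augment ((Set.finite_singleton b).insert a).isCompact
  have ha' : ∀ n, a ∈ K' n := fun n => Or.inl (Set.mem_insert a {b})
  have hb' : ∀ n, b ∈ K' n := fun n => Or.inl (Set.mem_insert_of_mem _ rfl)
  -- saturations of compact sets meet compacts in compacts
  have hsat : ∀ {A L : Set X}, IsCompact A → IsCompact L →
      IsCompact ({y | ∃ x ∈ A, s.r x y} ∩ L) := by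
    intro A L hA hL
    have he : {y | ∃ x ∈ A, s.r x y} ∩ L
        = Prod.snd '' ({p : X × X | s.r p.1 p.2} ∩ A ×ˢ L) := by
      ext y
      constructor
      · rintro ⟨⟨x, hxA, hxy⟩, hyL⟩
        exact ⟨(x, y), ⟨hxy, hxA, hyL⟩, rfl⟩
      · rintro ⟨⟨x, y'⟩, ⟨hr, hxA, hyL⟩, rfl⟩
        exact ⟨⟨x, hxA, hr⟩, hyL⟩
    rw [he]
    exact ((hA.prod hL).inter_left hcl).image continuous_snd
  -- one construction step
  have stepT : ∀ (j : ℕ) (C D : Set X), IsCompact C → IsCompact D →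
      (∀ x ∈ C, ∀ y ∈ D, ¬ s.r x y) →
      ∃ p : Set X × Set X, IsOpen p.1 ∧ IsOpen p.2 ∧ C ⊆ p.1 ∧ D ⊆ p.2 ∧
        ∀ x ∈ closure (p.1 ∩ K' j), ∀ y ∈ closure (p.2 ∩ K' j), ¬ s.r x y := by
    intro j C D hc hd hdis
    have hsub : C ×ˢ D ⊆ {p : X × X | s.r p.1 p.2}ᶜ := by
      rintro ⟨x, y⟩ ⟨hx, hy⟩ h
      exact hdis x hx y hy h
    obtain ⟨U₁, U₂, hU₁, hU₂, hCU, hDU, hUU⟩ :=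
      generalized_tube_lemma hc hd hcl.isOpen_compl hsub
    obtain ⟨V, hVo, hCV, hVcl⟩ := shrink hc (fam'.compact j) hU₁ hCU
    obtain ⟨W, hWo, hDW, hWcl⟩ := shrink hd (fam'.compact j) hU₂ hDU
    refine ⟨(V, W), hVo, hWo, hCV, hDW, ?_⟩
    intro x hx y hy hr
    have hxK : x ∈ K' j := by
      have := closure_mono (Set.inter_subset_right : V ∩ K' j ⊆ K' j) hx
      rwa [(fam'.compact j).isClosed.closure_eq] at this
    have hyK : y ∈ K' j := by
      have := closure_mono (Set.inter_subset_right : W ∩ K' j ⊆ K' j) hy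
      rwa [(fam'.compact j).isClosed.closure_eq] at this
    have hxU : x ∈ U₁ := hVcl ⟨closure_mono Set.inter_subset_left hx, hxK⟩
    have hyU : y ∈ U₂ := hWcl ⟨closure_mono Set.inter_subset_left hy, hyK⟩
    exact hUU (show (x, y) ∈ U₁ ×ˢ U₂ from ⟨hxU, hyU⟩) hr
  -- the recursion
  have hrec := natrec_choice
    (P := fun n (p : Set X × Set X) => IsOpen p.1 ∧ IsOpen p.2 ∧ a ∈ p.1 ∧ b ∈ p.2 ∧
      ∀ x ∈ closure (p.1 ∩ K' n), ∀ y ∈ closure (p.2 ∩ K' n), ¬ s.r x y)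
    (Rl := fun n p q => ({y | ∃ x ∈ closure (p.1 ∩ K' n), s.r x y} ∩ K' (n+1) ⊆ q.1) ∧
      ({y | ∃ x ∈ closure (p.2 ∩ K' n), s.r x y} ∩ K' (n+1) ⊆ q.2))
    ?_ ?_
  · obtain ⟨f, hInv, hLink⟩ := hrec
    have hVm : ∀ n, (f n).1 ∩ K' n ⊆ (f (n+1)).1 := by
      intro n x hx
      exact (hLink n).1 ⟨⟨x, subset_closure hx, s.iseqv.refl x⟩,
        fam'.mono (Nat.le_succ n) hx.2⟩
    have hWm : ∀ n, (f n).2 ∩ K' n ⊆ (f (n+1)).2 := by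
      intro n x hx
      exact (hLink n).2 ⟨⟨x, subset_closure hx, s.iseqv.refl x⟩,
        fam'.mono (Nat.le_succ n) hx.2⟩
    obtain ⟨hUo, hUmono⟩ := unionOpen fam' (fun n => (hInv n).1) hVm
    obtain ⟨hVo, hVmono⟩ := unionOpen fam' (fun n => (hInv n).2.1) hWm
    refine ⟨⋃ n, (f n).1 ∩ K' n, ⋃ n, (f n).2 ∩ K' n, hUo, hVo, ?_, ?_, ?_, ?_, ?_⟩
    · exact Set.mem_iUnion.2 ⟨0, ⟨(hInv 0).2.2.1, ha' 0⟩⟩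
    · exact Set.mem_iUnion.2 ⟨0, ⟨(hInv 0).2.2.2.1, hb' 0⟩⟩
    · rintro x ⟨hxU, hxV⟩
      obtain ⟨n, hxn⟩ := Set.mem_iUnion.1 hxU
      obtain ⟨m, hxm⟩ := Set.mem_iUnion.1 hxV
      have hxN := hUmono (le_max_left n m) hxn
      have hxM := hVmono (le_max_right n m) hxm
      exact (hInv (max n m)).2.2.2.2 x (subset_closure hxN) x (subset_closure hxM)
        (s.iseqv.refl x)
    · intro x hxU y hr
      obtain ⟨n, hxn⟩ := Set.mem_iUnion.1 hxU
      have hy : y ∈ ⋃ k, K' k := fam'.cover ▸ Set.mem_univ y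
      obtain ⟨m, hym⟩ := Set.mem_iUnion.1 hy
      have hxN := hUmono (le_max_left n m) hxn
      have hyK : y ∈ K' (max n m + 1) := fam'.mono (by omega) hym
      have : y ∈ (f (max n m + 1)).1 :=
        (hLink (max n m)).1 ⟨⟨x, subset_closure hxN, hr⟩, hyK⟩
      exact Set.mem_iUnion.2 ⟨max n m + 1, ⟨this, hyK⟩⟩
    · intro x hxV y hr
      obtain ⟨n, hxn⟩ := Set.mem_iUnion.1 hxV
      have hy : y ∈ ⋃ k, K' k := fam'.cover ▸ Set.mem_univ y
      obtain ⟨m, hym⟩ := Set.mem_iUnion.1 hy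
      have hxN := hVmono (le_max_left n m) hxn
      have hyK : y ∈ K' (max n m + 1) := fam'.mono (by omega) hym
      have : y ∈ (f (max n m + 1)).2 :=
        (hLink (max n m)).2 ⟨⟨x, subset_closure hxN, hr⟩, hyK⟩
      exact Set.mem_iUnion.2 ⟨max n m + 1, ⟨this, hyK⟩⟩
  · -- base case
    obtain ⟨p, h1, h2, h3, h4, h5⟩ := stepT 0 {a} {b} isCompact_singleton isCompact_singleton
      (by rintro x rfl y rfl; exact hab)
    exact ⟨p, h1, h2, h3 rfl, h4 rfl, h5⟩
  · -- inductive step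
    rintro n ⟨V, W⟩ ⟨hVo, hWo, haV, hbW, hdis⟩
    have hC1 : IsCompact (closure (V ∩ K' n)) :=
      (fam'.compact n).of_isClosed_subset isClosed_closure
        (closure_minimal Set.inter_subset_right (fam'.compact n).isClosed)
    have hD1 : IsCompact (closure (W ∩ K' n)) :=
      (fam'.compact n).of_isClosed_subset isClosed_closure
        (closure_minimal Set.inter_subset_right (fam'.compact n).isClosed)
    have hdis2 : ∀ x ∈ {y | ∃ x ∈ closure (V ∩ K' n), s.r x y} ∩ K' (n+1),
        ∀ y ∈ {y | ∃ x ∈ closure (W ∩ K' n), s.r x y} ∩ K' (n+1), ¬ s.r x y := by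
      rintro x ⟨⟨x₀, hx₀, hrx⟩, -⟩ y ⟨⟨y₀, hy₀, hry⟩, -⟩ hxy
      exact hdis x₀ hx₀ y₀ hy₀ (s.iseqv.trans (s.iseqv.trans hrx hxy) (s.iseqv.symm hry))
    obtain ⟨p, h1, h2, h3, h4, h5⟩ := stepT (n+1) _ _
      (hsat hC1 (fam'.compact (n+1))) (hsat hD1 (fam'.compact (n+1))) hdis2
    refine ⟨p, ⟨h1, h2, ?_, ?_, h5⟩, h3, h4⟩
    · exact h3 ⟨⟨a, subset_closure ⟨haV, ha' n⟩, s.iseqv.refl a⟩, ha' (n+1)⟩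
    · exact h4 ⟨⟨b, subset_closure ⟨hbW, hb' n⟩, s.iseqv.refl b⟩, hb' (n+1)⟩

end KwProof

/-- Let `S` be a topological ternary semigroup whose underlying space is
a `k_w`-space, and `s` a closed congruence on `S`.  Then `S/s` with the induced ternary
multiplication and the quotient topology is a topological ternary semigroup: it is
Hausdorff and the induced ternary multiplication is continuous. -/
theorem quotient_topological_ternary_semigroup_of_kw {S : Type*}
    [TopologicalSpace S] [T2Space S] (m : S → S → S → S)
    (hassoc : ∀ a b c d e : S, m (m a b c) d e = m a (m b c d) e ∧
      m a (m b c d) e = m a b (m c d e))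
    (hm : Continuous fun p : S × S × S => m p.1 p.2.1 p.2.2)
    (hkw : IsKwSpace S)
    (s : Setoid S)
    (hcong : ∀ a b c d e f : S, s.r a b → s.r c d → s.r e f → s.r (m a c e) (m b d f))
    (hclosed : IsClosed {p : S × S | s.r p.1 p.2})
    (g : Quotient s → Quotient s → Quotient s → Quotient s)
    (hg : ∀ a b c : S, g (Quotient.mk s a) (Quotient.mk s b) (Quotient.mk s c)
      = Quotient.mk s (m a b c)) :
    T2Space (Quotient s) ∧
      Continuous fun p : Quotient s × Quotient s × Quotient s => g p.1 p.2.1 p.2.2 := by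
  classical
  obtain ⟨K, fam⟩ := KwProof.fam_of_isKw hkw
  have hqm : IsQuotientMap (Quotient.mk s) := isQuotientMap_quotient_mk'
  have hπc : Continuous (Quotient.mk s) := continuous_quotient_mk'
  have ht2 : T2Space (Quotient s) := by
    constructor
    intro x y hxy
    obtain ⟨a, rfl⟩ := Quotient.exists_rep x
    obtain ⟨b, rfl⟩ := Quotient.exists_rep y
    have hab : ¬ s.r a b := fun h => hxy (Quotient.sound h)
    obtain ⟨U, V, hUo, hVo, haU, hbV, hdisj, hsatU, hsatV⟩ :=
      KwProof.sep fam s hclosed hab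
    have hUsat : Quotient.mk s ⁻¹' (Quotient.mk s '' U) = U := by
      ext z
      constructor
      · rintro ⟨u, huU, hequ⟩
        exact hsatU u huU z (Quotient.exact hequ)
      · intro hz; exact ⟨z, hz, rfl⟩
    have hVsat : Quotient.mk s ⁻¹' (Quotient.mk s '' V) = V := by
      ext z
      constructor
      · rintro ⟨u, huU, hequ⟩
        exact hsatV u huU z (Quotient.exact hequ)
      · intro hz; exact ⟨z, hz, rfl⟩
    refine ⟨Quotient.mk s '' U, Quotient.mk s '' V, ?_, ?_,
      ⟨a, haU, rfl⟩, ⟨b, hbV, rfl⟩, ?_⟩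
    · rw [← hqm.isOpen_preimage, hUsat]; exact hUo
    · rw [← hqm.isOpen_preimage, hVsat]; exact hVo
    · rw [Set.disjoint_left]
      rintro q ⟨u, huU, hqu⟩ ⟨v, hvV, hqv⟩
      have hruv : s.r u v := Quotient.exact (hqu.trans hqv.symm)
      exact hdisj v ⟨hsatU u huU v hruv, hvV⟩
  refine ⟨ht2, ?_⟩
  haveI := ht2
  have famQ : KwProof.Fam (Quotient s) (fun n => Quotient.mk s '' K n) := by
    refine ⟨fun n => (fam.compact n).image hπc,
      fun m' n h => Set.image_mono (fam.mono h), ?_, ?_⟩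
    · apply Set.eq_univ_of_forall
      intro q
      obtain ⟨x, rfl⟩ := Quotient.exists_rep q
      obtain ⟨n, hn⟩ := Set.mem_iUnion.1 (fam.cover ▸ Set.mem_univ x)
      exact Set.mem_iUnion.2 ⟨n, ⟨x, hn, rfl⟩⟩
    · intro B hB
      rw [← hqm.isClosed_preimage]
      apply fam.crit
      intro n
      have he : Quotient.mk s ⁻¹' B ∩ K n
          = Quotient.mk s ⁻¹' (B ∩ Quotient.mk s '' K n) ∩ K n := by
        ext x
        constructor
        · rintro ⟨hx, hk⟩; exact ⟨⟨hx, ⟨x, hk, rfl⟩⟩, hk⟩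
        · rintro ⟨⟨hx, -⟩, hk⟩; exact ⟨hx, hk⟩
      rw [he]
      exact ((hB n).preimage hπc).inter (fam.compact n).isClosed
  have famQ3 : KwProof.Fam (Quotient s × Quotient s × Quotient s)
      (fun n => (Quotient.mk s '' K n) ×ˢ
        ((Quotient.mk s '' K n) ×ˢ (Quotient.mk s '' K n))) :=
    KwProof.fam_prod famQ (KwProof.fam_prod famQ famQ)
  rw [continuous_iff_isClosed]
  intro T hT
  apply famQ3.crit
  intro n
  have hGF : Continuous (fun p : S × S × S => Quotient.mk s (m p.1 p.2.1 p.2.2)) :=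
    hπc.comp hm
  have hpre : IsClosed ((fun p : S × S × S => Quotient.mk s (m p.1 p.2.1 p.2.2)) ⁻¹' T) :=
    hT.preimage hGF
  have he : (fun p : Quotient s × Quotient s × Quotient s => g p.1 p.2.1 p.2.2) ⁻¹' T
      ∩ ((Quotient.mk s '' K n) ×ˢ ((Quotient.mk s '' K n) ×ˢ (Quotient.mk s '' K n)))
      = (fun p : S × S × S =>
          (Quotient.mk s p.1, Quotient.mk s p.2.1, Quotient.mk s p.2.2)) ''
        (((fun p : S × S × S => Quotient.mk s (m p.1 p.2.1 p.2.2)) ⁻¹' T)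
          ∩ (K n ×ˢ (K n ×ˢ K n))) := by
    ext ⟨q1, q2, q3⟩
    constructor
    · rintro ⟨hqT, ⟨x, hx, rfl⟩, ⟨y, hy, rfl⟩, ⟨z, hz, rfl⟩⟩
      refine ⟨(x, y, z), ⟨?_, hx, hy, hz⟩, rfl⟩
      show Quotient.mk s (m x y z) ∈ T
      rw [← hg]
      exact hqT
    · rintro ⟨⟨x, y, z⟩, ⟨hT', hx, hy, hz⟩, heq⟩
      obtain ⟨rfl, rfl, rfl⟩ :
          Quotient.mk s x = q1 ∧ Quotient.mk s y = q2 ∧ Quotient.mk s z = q3 := by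
        simpa using heq
      refine ⟨?_, ⟨x, hx, rfl⟩, ⟨y, hy, rfl⟩, ⟨z, hz, rfl⟩⟩
      show g (Quotient.mk s x) (Quotient.mk s y) (Quotient.mk s z) ∈ T
      rw [hg]
      exact hT'
  rw [he]
  have hfc : Continuous (fun p : S × S × S =>
      (Quotient.mk s p.1, Quotient.mk s p.2.1, Quotient.mk s p.2.2)) :=
    (hπc.comp continuous_fst).prodMk
      ((hπc.comp (continuous_fst.comp continuous_snd)).prodMk
        (hπc.comp (continuous_snd.comp continuous_snd)))
  have hc : IsCompact ((fun p : S × S × S =>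
      (Quotient.mk s p.1, Quotient.mk s p.2.1, Quotient.mk s p.2.2)) ''
        (((fun p : S × S × S => Quotient.mk s (m p.1 p.2.1 p.2.2)) ⁻¹' T)
          ∩ (K n ×ˢ (K n ×ˢ K n)))) :=
    ((((fam.compact n).prod ((fam.compact n).prod (fam.compact n))).inter_left
      hpre).image hfc)
  exact hc.isClosed
end

section
/- Let S be a locally compact, σ-compact topological ternary semigroup and I a closed ideal of S. Then the Rees quotient S/((I×I) ∪ Δ(S)), with the induced ternary multiplication and the quotient topology, is a topological ternary semigroup: it is Hausdorff and its induced ternary multiplication is continuous. -/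
open Set

section Aux

variable {S : Type*} [TopologicalSpace S] [T2Space S] [LocallyCompactSpace S]

private lemma tube3 {U : Set (S × S × S)} (hU : IsOpen U) {P Q R : Set S}
    (hP : IsCompact P) (hQ : IsCompact Q) (hR : IsCompact R)
    (h : P ×ˢ Q ×ˢ R ⊆ U) :
    ∃ A B C : Set S, IsOpen A ∧ IsOpen B ∧ IsOpen C ∧ P ⊆ A ∧ Q ⊆ B ∧ R ⊆ C ∧
      A ×ˢ B ×ˢ C ⊆ U := by
  obtain ⟨A, D, hA, hD, hPA, hQRD, hAD⟩ := generalized_tube_lemma hP (hQ.prod hR) hU h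
  obtain ⟨B, C, hB, hC, hQB, hRC, hBC⟩ := generalized_tube_lemma hQ hR hD hQRD
  exact ⟨A, B, C, hA, hB, hC, hPA, hQB, hRC, fun x hx => hAD ⟨hx.1, hBC hx.2⟩⟩

private lemma build3 {U : Set (S × S × S)} (hU : IsOpen U) {P Q R Wa Wb Wc : Set S}
    (hP : IsCompact P) (hQ : IsCompact Q) (hR : IsCompact R)
    (hWa : IsOpen Wa) (hWb : IsOpen Wb) (hWc : IsOpen Wc)
    (hPW : P ⊆ Wa) (hQW : Q ⊆ Wb) (hRW : R ⊆ Wc)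
    (h : P ×ˢ Q ×ˢ R ⊆ U) :
    ∃ A B C : Set S, IsOpen A ∧ IsOpen B ∧ IsOpen C ∧ P ⊆ A ∧ Q ⊆ B ∧ R ⊆ C ∧
      IsCompact (closure A) ∧ IsCompact (closure B) ∧ IsCompact (closure C) ∧
      closure A ⊆ Wa ∧ closure B ⊆ Wb ∧ closure C ⊆ Wc ∧
      closure A ×ˢ closure B ×ˢ closure C ⊆ U := by
  obtain ⟨A', B', C', hA', hB', hC', hPA', hQB', hRC', hsub⟩ := tube3 hU hP hQ hR h
  obtain ⟨KA, hKA, hPKA, hKAsub⟩ :=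
    exists_compact_between hP (hA'.inter hWa) (subset_inter hPA' hPW)
  obtain ⟨KB, hKB, hQKB, hKBsub⟩ :=
    exists_compact_between hQ (hB'.inter hWb) (subset_inter hQB' hQW)
  obtain ⟨KC, hKC, hRKC, hKCsub⟩ :=
    exists_compact_between hR (hC'.inter hWc) (subset_inter hRC' hRW)
  have hclA : closure (interior KA) ⊆ KA := closure_minimal interior_subset hKA.isClosed
  have hclB : closure (interior KB) ⊆ KB := closure_minimal interior_subset hKB.isClosed
  have hclC : closure (interior KC) ⊆ KC := closure_minimal interior_subset hKC.isClosed
  refine ⟨interior KA, interior KB, interior KC, isOpen_interior, isOpen_interior,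
    isOpen_interior, hPKA, hQKB, hRKC,
    hKA.of_isClosed_subset isClosed_closure hclA,
    hKB.of_isClosed_subset isClosed_closure hclB,
    hKC.of_isClosed_subset isClosed_closure hclC,
    hclA.trans (hKAsub.trans inter_subset_right),
    hclB.trans (hKBsub.trans inter_subset_right),
    hclC.trans (hKCsub.trans inter_subset_right), ?_⟩
  intro p hp
  exact hsub ⟨(hKAsub (hclA hp.1)).1, (hKBsub (hclB hp.2.1)).1, (hKCsub (hclC hp.2.2)).1⟩

/-- The key saturation-tube lemma. -/
private lemma main_sat_lemma [SigmaCompactSpace S] {I : Set S} (hIclosed : IsClosed I)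
    {U : Set (S × S × S)} (hU : IsOpen U)
    (sat1 : ∀ x y z, (x, y, z) ∈ U → x ∈ I → ∀ x' ∈ I, (x', y, z) ∈ U)
    (sat2 : ∀ x y z, (x, y, z) ∈ U → y ∈ I → ∀ y' ∈ I, (x, y', z) ∈ U)
    (sat3 : ∀ x y z, (x, y, z) ∈ U → z ∈ I → ∀ z' ∈ I, (x, y, z') ∈ U)
    {a b c : S} (habc : (a, b, c) ∈ U) :
    ∃ A B C : Set S, IsOpen A ∧ IsOpen B ∧ IsOpen C ∧ a ∈ A ∧ b ∈ B ∧ c ∈ C ∧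
      (∀ x ∈ A, x ∈ I → I ⊆ A) ∧ (∀ x ∈ B, x ∈ I → I ⊆ B) ∧ (∀ x ∈ C, x ∈ I → I ⊆ C) ∧
      A ×ˢ B ×ˢ C ⊆ U := by
  classical
  set L := CompactExhaustion.choice S with hLdef
  set seed : S → ℕ → Set S := fun x n => if x ∈ I then insert x (I ∩ L n) else {x} with hseed
  have seedmem : ∀ x n, x ∈ seed x n := by
    intro x n
    by_cases hx : x ∈ I <;> simp [hseed, hx]
  have seedcompact : ∀ x n, IsCompact (seed x n) := by
    intro x n
    by_cases hx : x ∈ I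
    · simpa [hseed, hx] using (((L.isCompact n).inter_left hIclosed).insert x)
    · simpa [hseed, hx] using (isCompact_singleton : IsCompact {x})
  have seedsub : ∀ x n y, y ∈ seed x n → y = x ∨ (y ∈ I ∧ x ∈ I) := by
    intro x n y hy
    by_cases hx : x ∈ I
    · simp only [hseed, if_pos hx, mem_insert_iff, mem_inter_iff] at hy
      rcases hy with rfl | ⟨h1, _⟩
      · exact Or.inl rfl
      · exact Or.inr ⟨h1, hx⟩
    · simp only [hseed, if_neg hx, mem_singleton_iff] at hy
      exact Or.inl hy
  have seedI : ∀ x n, x ∈ I → I ∩ L n ⊆ seed x n := by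
    intro x n hx
    simp only [hseed, if_pos hx]
    exact subset_insert _ _
  have window : ∀ x : S, ∃ W : Set S, IsOpen W ∧ x ∈ W ∧ (x ∉ I → W ∩ I = ∅) ∧
      (x ∈ I → W = Set.univ) := by
    intro x
    by_cases hx : x ∈ I
    · exact ⟨Set.univ, isOpen_univ, mem_univ x, fun h => absurd hx h, fun _ => rfl⟩
    · obtain ⟨K, hK, hxK, hKsub⟩ := exists_compact_between isCompact_singleton
        hIclosed.isOpen_compl (by simpa using hx)
      refine ⟨interior K, isOpen_interior, hxK rfl, fun _ => ?_, fun h => absurd h hx⟩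
      apply eq_empty_of_subset_empty
      intro y hy
      exact (hKsub (interior_subset hy.1)) hy.2
  obtain ⟨Wa, hWaO, haWa, hWaI, hWaU⟩ := window a
  obtain ⟨Wb, hWbO, hbWb, hWbI, hWbU⟩ := window b
  obtain ⟨Wc, hWcO, hcWc, hWcI, hWcU⟩ := window c
  have seedW : ∀ (x : S) (W : Set S), x ∈ W → (x ∈ I → W = Set.univ) → ∀ n, seed x n ⊆ W := by
    intro x W hxW hWU n y hy
    by_cases hx : x ∈ I
    · rw [hWU hx]; trivial
    · rcases seedsub x n y hy with rfl | ⟨_, h⟩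
      · exact hxW
      · exact absurd h hx
  have seedWa := seedW a Wa haWa hWaU
  have seedWb := seedW b Wb hbWb hWbU
  have seedWc := seedW c Wc hcWc hWcU
  have satProd : ∀ P Q R : Set S, P ×ˢ Q ×ˢ R ⊆ U →
      (a ∈ I → (P ∩ I).Nonempty) → (b ∈ I → (Q ∩ I).Nonempty) → (c ∈ I → (R ∩ I).Nonempty) →
      ∀ x y z : S, (x ∈ P ∨ (x ∈ I ∧ a ∈ I)) → (y ∈ Q ∨ (y ∈ I ∧ b ∈ I)) →
        (z ∈ R ∨ (z ∈ I ∧ c ∈ I)) → (x, y, z) ∈ U := by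
    intro P Q R hPQR hPa hQb hRc x y z hx hy hz
    have step1 : ∀ y' ∈ Q, ∀ z' ∈ R, (x, y', z') ∈ U := by
      intro y' hy' z' hz'
      rcases hx with hxP | ⟨hxI, haI⟩
      · exact hPQR ⟨hxP, hy', hz'⟩
      · obtain ⟨q, hqP, hqI⟩ := hPa haI
        exact sat1 q y' z' (hPQR ⟨hqP, hy', hz'⟩) hqI x hxI
    have step2 : ∀ z' ∈ R, (x, y, z') ∈ U := by
      intro z' hz'
      rcases hy with hyQ | ⟨hyI, hbI⟩
      · exact step1 y hyQ z' hz'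
      · obtain ⟨q, hqQ, hqI⟩ := hQb hbI
        exact sat2 x q z' (step1 q hqQ z' hz') hqI y hyI
    rcases hz with hzR | ⟨hzI, hcI⟩
    · exact step2 z hzR
    · obtain ⟨q, hqR, hqI⟩ := hRc hcI
      exact sat3 x y q (step2 q hqR) hqI z hzI
  -- the invariant for the recursive construction
  let Good : ℕ → Set S × Set S × Set S → Prop := fun n t =>
    IsOpen t.1 ∧ IsOpen t.2.1 ∧ IsOpen t.2.2 ∧
    seed a n ⊆ t.1 ∧ seed b n ⊆ t.2.1 ∧ seed c n ⊆ t.2.2 ∧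
    IsCompact (closure t.1) ∧ IsCompact (closure t.2.1) ∧ IsCompact (closure t.2.2) ∧
    closure t.1 ⊆ Wa ∧ closure t.2.1 ⊆ Wb ∧ closure t.2.2 ⊆ Wc ∧
    closure t.1 ×ˢ closure t.2.1 ×ˢ closure t.2.2 ⊆ U
  have base : ∃ t, Good 0 t := by
    have hsing : ({a} : Set S) ×ˢ ({b} : Set S) ×ˢ ({c} : Set S) ⊆ U := by
      rintro ⟨x, y, z⟩ ⟨hx, hy, hz⟩
      simp only [mem_singleton_iff] at hx hy hz
      subst hx; subst hy; subst hz
      exact habc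
    have hprod : seed a 0 ×ˢ seed b 0 ×ˢ seed c 0 ⊆ U := by
      rintro ⟨x, y, z⟩ ⟨hx, hy, hz⟩
      refine satProd {a} {b} {c} hsing (fun h => ⟨a, rfl, h⟩) (fun h => ⟨b, rfl, h⟩)
        (fun h => ⟨c, rfl, h⟩) x y z ?_ ?_ ?_
      · exact (seedsub a 0 x hx).imp (fun h => h) (fun h => h)
      · exact (seedsub b 0 y hy).imp (fun h => h) (fun h => h)
      · exact (seedsub c 0 z hz).imp (fun h => h) (fun h => h)
    obtain ⟨A, B, C, hAo, hBo, hCo, hPA, hQB, hRC, hcA, hcB, hcC, hWA, hWB, hWC, hsub⟩ :=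
      build3 hU (seedcompact a 0) (seedcompact b 0) (seedcompact c 0)
        hWaO hWbO hWcO (seedWa 0) (seedWb 0) (seedWc 0) hprod
    exact ⟨(A, B, C), hAo, hBo, hCo, hPA, hQB, hRC, hcA, hcB, hcC, hWA, hWB, hWC, hsub⟩
  have hstep : ∀ n (t : Set S × Set S × Set S), Good n t →
      ∃ t' : Set S × Set S × Set S, Good (n + 1) t' ∧
        closure t.1 ⊆ t'.1 ∧ closure t.2.1 ⊆ t'.2.1 ∧ closure t.2.2 ⊆ t'.2.2 := by
    rintro n ⟨A, B, C⟩ ⟨hAo, hBo, hCo, hsA, hsB, hsC, hcA, hcB, hcC, hWA, hWB, hWC, hsub⟩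
    have hprod : (seed a (n + 1) ∪ closure A) ×ˢ (seed b (n + 1) ∪ closure B) ×ˢ
        (seed c (n + 1) ∪ closure C) ⊆ U := by
      rintro ⟨x, y, z⟩ ⟨hx, hy, hz⟩
      refine satProd (closure A) (closure B) (closure C) hsub
        (fun h => ⟨a, subset_closure (hsA (seedmem a n)), h⟩)
        (fun h => ⟨b, subset_closure (hsB (seedmem b n)), h⟩)
        (fun h => ⟨c, subset_closure (hsC (seedmem c n)), h⟩) x y z ?_ ?_ ?_
      · rcases hx with hx | hx
        · rcases seedsub a (n + 1) x hx with he | h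
          · rw [he]; exact Or.inl (subset_closure (hsA (seedmem a n)))
          · exact Or.inr h
        · exact Or.inl hx
      · rcases hy with hy | hy
        · rcases seedsub b (n + 1) y hy with he | h
          · rw [he]; exact Or.inl (subset_closure (hsB (seedmem b n)))
          · exact Or.inr h
        · exact Or.inl hy
      · rcases hz with hz | hz
        · rcases seedsub c (n + 1) z hz with he | h
          · rw [he]; exact Or.inl (subset_closure (hsC (seedmem c n)))
          · exact Or.inr h
        · exact Or.inl hz
    obtain ⟨A', B', C', hAo', hBo', hCo', hPA', hQB', hRC', hcA', hcB', hcC', hWA', hWB',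
        hWC', hsub'⟩ :=
      build3 hU ((seedcompact a (n + 1)).union hcA) ((seedcompact b (n + 1)).union hcB)
        ((seedcompact c (n + 1)).union hcC) hWaO hWbO hWcO
        (union_subset (seedWa (n + 1)) hWA) (union_subset (seedWb (n + 1)) hWB)
        (union_subset (seedWc (n + 1)) hWC) hprod
    exact ⟨(A', B', C'),
      ⟨hAo', hBo', hCo', subset_union_left.trans hPA', subset_union_left.trans hQB',
        subset_union_left.trans hRC', hcA', hcB', hcC', hWA', hWB', hWC', hsub'⟩,
      subset_union_right.trans hPA', subset_union_right.trans hQB',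
      subset_union_right.trans hRC'⟩
  obtain ⟨t0, ht0⟩ := base
  choose st hstGood hst1 hst2 hst3 using hstep
  let F : ∀ n : ℕ, {t : Set S × Set S × Set S // Good n t} := fun n =>
    Nat.rec ⟨t0, ht0⟩ (fun k ih => ⟨st k ih.1 ih.2, hstGood k ih.1 ih.2⟩) n
  have hF : ∀ n, Good n (F n).1 := fun n => (F n).2
  have hFsucc : ∀ n, (F (n + 1)).1 = st n (F n).1 (F n).2 := fun _ => rfl
  have hmono1 : ∀ n, (F n).1.1 ⊆ (F (n + 1)).1.1 := by
    intro n
    rw [hFsucc n]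
    exact subset_closure.trans (hst1 n (F n).1 (F n).2)
  have hmono2 : ∀ n, (F n).1.2.1 ⊆ (F (n + 1)).1.2.1 := by
    intro n
    rw [hFsucc n]
    exact subset_closure.trans (hst2 n (F n).1 (F n).2)
  have hmono3 : ∀ n, (F n).1.2.2 ⊆ (F (n + 1)).1.2.2 := by
    intro n
    rw [hFsucc n]
    exact subset_closure.trans (hst3 n (F n).1 (F n).2)
  have hm1 : ∀ {p n : ℕ}, p ≤ n → (F p).1.1 ⊆ (F n).1.1 := by
    intro p n h
    induction h with
    | refl => exact subset_rfl
    | step _ ih => exact ih.trans (hmono1 _)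
  have hm2 : ∀ {p n : ℕ}, p ≤ n → (F p).1.2.1 ⊆ (F n).1.2.1 := by
    intro p n h
    induction h with
    | refl => exact subset_rfl
    | step _ ih => exact ih.trans (hmono2 _)
  have hm3 : ∀ {p n : ℕ}, p ≤ n → (F p).1.2.2 ⊆ (F n).1.2.2 := by
    intro p n h
    induction h with
    | refl => exact subset_rfl
    | step _ ih => exact ih.trans (hmono3 _)
  refine ⟨⋃ n, (F n).1.1, ⋃ n, (F n).1.2.1, ⋃ n, (F n).1.2.2,
    isOpen_iUnion (fun n => (hF n).1), isOpen_iUnion (fun n => (hF n).2.1),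
    isOpen_iUnion (fun n => (hF n).2.2.1),
    mem_iUnion.2 ⟨0, (hF 0).2.2.2.1 (seedmem a 0)⟩,
    mem_iUnion.2 ⟨0, (hF 0).2.2.2.2.1 (seedmem b 0)⟩,
    mem_iUnion.2 ⟨0, (hF 0).2.2.2.2.2.1 (seedmem c 0)⟩, ?_, ?_, ?_, ?_⟩
  · intro x hx hxI
    by_cases haI : a ∈ I
    · intro y hy
      obtain ⟨n, hn⟩ := L.exists_mem y
      exact mem_iUnion.2 ⟨n, (hF n).2.2.2.1 (seedI a n haI ⟨hy, hn⟩)⟩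
    · exfalso
      obtain ⟨n, hn⟩ := mem_iUnion.1 hx
      have hW : x ∈ Wa := (hF n).2.2.2.2.2.2.2.2.2.1 (subset_closure hn)
      exact absurd (hWaI haI ▸ (⟨hW, hxI⟩ : x ∈ Wa ∩ I)) (notMem_empty x)
  · intro x hx hxI
    by_cases hbI : b ∈ I
    · intro y hy
      obtain ⟨n, hn⟩ := L.exists_mem y
      exact mem_iUnion.2 ⟨n, (hF n).2.2.2.2.1 (seedI b n hbI ⟨hy, hn⟩)⟩
    · exfalso
      obtain ⟨n, hn⟩ := mem_iUnion.1 hx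
      have hW : x ∈ Wb := (hF n).2.2.2.2.2.2.2.2.2.2.1 (subset_closure hn)
      exact absurd (hWbI hbI ▸ (⟨hW, hxI⟩ : x ∈ Wb ∩ I)) (notMem_empty x)
  · intro x hx hxI
    by_cases hcI : c ∈ I
    · intro y hy
      obtain ⟨n, hn⟩ := L.exists_mem y
      exact mem_iUnion.2 ⟨n, (hF n).2.2.2.2.2.1 (seedI c n hcI ⟨hy, hn⟩)⟩
    · exfalso
      obtain ⟨n, hn⟩ := mem_iUnion.1 hx
      have hW : x ∈ Wc := (hF n).2.2.2.2.2.2.2.2.2.2.2.1 (subset_closure hn)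
      exact absurd (hWcI hcI ▸ (⟨hW, hxI⟩ : x ∈ Wc ∩ I)) (notMem_empty x)
  · rintro ⟨x, y, z⟩ ⟨hx, hy, hz⟩
    obtain ⟨n1, hn1⟩ := mem_iUnion.1 hx
    obtain ⟨n2, hn2⟩ := mem_iUnion.1 hy
    obtain ⟨n3, hn3⟩ := mem_iUnion.1 hz
    set N := max n1 (max n2 n3) with hN
    have hx' : x ∈ closure (F N).1.1 := subset_closure (hm1 (le_max_left _ _) hn1)
    have hy' : y ∈ closure (F N).1.2.1 :=
      subset_closure (hm2 ((le_max_left n2 n3).trans (le_max_right _ _)) hn2)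
    have hz' : z ∈ closure (F N).1.2.2 :=
      subset_closure (hm3 ((le_max_right n2 n3).trans (le_max_right _ _)) hn3)
    exact (hF N).2.2.2.2.2.2.2.2.2.2.2.2 ⟨hx', hy', hz'⟩

end Aux

theorem rees_quotient_topological_ternary_semigroup_of_locallyCompact_sigmaCompact
    {S : Type*} [TopologicalSpace S] [T2Space S] [LocallyCompactSpace S]
    [SigmaCompactSpace S] (m : S → S → S → S)
    (hassoc : ∀ a b c d e : S, m (m a b c) d e = m a (m b c d) e ∧
      m a (m b c d) e = m a b (m c d e))
    (hm : Continuous fun p : S × S × S => m p.1 p.2.1 p.2.2)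
    (I : Set S) (hne : I.Nonempty) (hIclosed : IsClosed I)
    (hideal : ∀ a b : S, ∀ x ∈ I, m a b x ∈ I ∧ m a x b ∈ I ∧ m x a b ∈ I)
    (s : Setoid S)
    (hrel : ∀ x y : S, s.r x y ↔ ((x ∈ I ∧ y ∈ I) ∨ x = y))
    (g : Quotient s → Quotient s → Quotient s → Quotient s)
    (hg : ∀ a b c : S, g (Quotient.mk s a) (Quotient.mk s b) (Quotient.mk s c)
      = Quotient.mk s (m a b c)) :
    T2Space (Quotient s) ∧
      Continuous fun p : Quotient s × Quotient s × Quotient s => g p.1 p.2.1 p.2.2 := by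
  classical
  have hqm : Topology.IsQuotientMap (Quotient.mk s) := isQuotientMap_quotient_mk' (s := s)
  -- images of saturated sets: preimage computation
  have preim : ∀ A : Set S, (∀ x ∈ A, x ∈ I → I ⊆ A) →
      Quotient.mk s ⁻¹' (Quotient.mk s '' A) = A := by
    intro A hA
    ext x
    simp only [Set.mem_preimage, Set.mem_image]
    constructor
    · rintro ⟨y, hyA, hyx⟩
      rcases (hrel y x).1 (Quotient.exact hyx) with ⟨hyI, hxI⟩ | rfl
      · exact hA y hyA hyI hxI
      · exact hyA
    · exact fun h => ⟨x, h, rfl⟩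
  have imgOpen : ∀ A : Set S, (∀ x ∈ A, x ∈ I → I ⊆ A) → IsOpen A →
      IsOpen (Quotient.mk s '' A) := by
    intro A hA hAo
    rw [← hqm.isOpen_preimage, preim A hA]
    exact hAo
  have imgDisj : ∀ A B : Set S, (∀ x ∈ A, x ∈ I → I ⊆ A) → (∀ x ∈ B, x ∈ I → I ⊆ B) →
      Disjoint A B → Disjoint (Quotient.mk s '' A) (Quotient.mk s '' B) := by
    intro A B hA hB hAB
    rw [Set.disjoint_left]
    rintro t ⟨x, hxA, rfl⟩ ⟨y, hyB, hyx⟩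
    rcases (hrel y x).1 (Quotient.exact hyx) with ⟨hyI, hxI⟩ | rfl
    · exact Set.disjoint_left.1 hAB (hA x hxA hxI hyI) hyB
    · exact Set.disjoint_left.1 hAB hxA hyB
  constructor
  · -- Hausdorff
    constructor
    intro u v huv
    obtain ⟨x, rfl⟩ := Quotient.exists_rep u
    obtain ⟨y, rfl⟩ := Quotient.exists_rep v
    have hnr : ¬ ((x ∈ I ∧ y ∈ I) ∨ x = y) :=
      fun h => huv (Quotient.sound ((hrel x y).2 h))
    push_neg at hnr
    obtain ⟨A, B, hAo, hBo, hxA, hyB, hAsat, hBsat, hAB⟩ :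
        ∃ A B : Set S, IsOpen A ∧ IsOpen B ∧ x ∈ A ∧ y ∈ B ∧
          (∀ z ∈ A, z ∈ I → I ⊆ A) ∧ (∀ z ∈ B, z ∈ I → I ⊆ B) ∧ Disjoint A B := by
      by_cases hxI : x ∈ I
      · have hyI : y ∉ I := fun h => (hnr.1 hxI) h
        obtain ⟨K, hK, hyK, hKsub⟩ := exists_compact_between isCompact_singleton
          hIclosed.isOpen_compl (by simpa using hyI)
        refine ⟨Kᶜ, interior K, hK.isClosed.isOpen_compl, isOpen_interior,
          fun h => hKsub h hxI, hyK rfl, fun z _ _ w hw h => hKsub h hw,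
          fun z hz hzI => absurd (hKsub (interior_subset hz)) (not_not_intro hzI), ?_⟩
        · exact Set.disjoint_left.2 fun z hz hz' => hz (interior_subset hz')
      · by_cases hyI : y ∈ I
        · obtain ⟨K, hK, hxK, hKsub⟩ := exists_compact_between isCompact_singleton
            hIclosed.isOpen_compl (by simpa using hxI)
          refine ⟨interior K, Kᶜ, isOpen_interior, hK.isClosed.isOpen_compl,
            hxK rfl, fun h => hKsub h hyI,
            fun z hz hzI => absurd (hKsub (interior_subset hz)) (not_not_intro hzI),
            fun z _ _ w hw h => hKsub h hw, ?_⟩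
          · exact Set.disjoint_left.2 fun z hz hz' => hz' (interior_subset hz)
        · obtain ⟨A0, B0, hA0, hB0, hxA0, hyB0, hAB0⟩ := t2_separation hnr.2
          refine ⟨A0 \ I, B0 \ I, hA0.sdiff hIclosed, hB0.sdiff hIclosed,
            ⟨hxA0, hxI⟩, ⟨hyB0, hyI⟩,
            fun z hz hzI => absurd hzI hz.2, fun z hz hzI => absurd hzI hz.2,
            hAB0.mono diff_subset diff_subset⟩
    exact ⟨Quotient.mk s '' A, Quotient.mk s '' B, imgOpen A hAsat hAo, imgOpen B hBsat hBo,
      ⟨x, hxA, rfl⟩, ⟨y, hyB, rfl⟩, imgDisj A B hAsat hBsat hAB⟩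
  · -- continuity
    rw [continuous_def]
    intro W hW
    rw [isOpen_iff_forall_mem_open]
    rintro ⟨u, v, w⟩ hp
    obtain ⟨a, rfl⟩ := Quotient.exists_rep u
    obtain ⟨b, rfl⟩ := Quotient.exists_rep v
    obtain ⟨c, rfl⟩ := Quotient.exists_rep w
    set V : Set S := Quotient.mk s ⁻¹' W with hV
    have hVopen : IsOpen V := hW.preimage hqm.continuous
    have hVsat : ∀ x ∈ V, ∀ y : S, s.r x y → y ∈ V := by
      intro x hx y h
      show Quotient.mk s y ∈ W
      rw [← Quotient.sound h]
      exact hx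
    set U : Set (S × S × S) := (fun p : S × S × S => m p.1 p.2.1 p.2.2) ⁻¹' V with hU
    have hUopen : IsOpen U := hVopen.preimage hm
    have habc : (a, b, c) ∈ U := by
      show m a b c ∈ V
      show Quotient.mk s (m a b c) ∈ W
      rw [← hg a b c]
      exact hp
    have hIV : ∀ {x y z x' y' z' : S}, (x, y, z) ∈ U → m x y z ∈ I → m x' y' z' ∈ I →
        (x', y', z') ∈ U := by
      intro x y z x' y' z' hxyz h1 h2
      exact hVsat _ hxyz _ ((hrel _ _).2 (Or.inl ⟨h1, h2⟩))
    have sat1 : ∀ x y z, (x, y, z) ∈ U → x ∈ I → ∀ x' ∈ I, (x', y, z) ∈ U := by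
      intro x y z hxyz hx x' hx'
      exact hIV hxyz (hideal y z x hx).2.2 (hideal y z x' hx').2.2
    have sat2 : ∀ x y z, (x, y, z) ∈ U → y ∈ I → ∀ y' ∈ I, (x, y', z) ∈ U := by
      intro x y z hxyz hy y' hy'
      exact hIV hxyz (hideal x z y hy).2.1 (hideal x z y' hy').2.1
    have sat3 : ∀ x y z, (x, y, z) ∈ U → z ∈ I → ∀ z' ∈ I, (x, y, z') ∈ U := by
      intro x y z hxyz hz z' hz'
      exact hIV hxyz (hideal x y z hz).1 (hideal x y z' hz').1
    obtain ⟨A, B, C, hAo, hBo, hCo, haA, hbB, hcC, hAsat, hBsat, hCsat, hsub⟩ :=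
      main_sat_lemma hIclosed hUopen sat1 sat2 sat3 habc
    refine ⟨(Quotient.mk s '' A) ×ˢ (Quotient.mk s '' B) ×ˢ (Quotient.mk s '' C), ?_,
      (imgOpen A hAsat hAo).prod ((imgOpen B hBsat hBo).prod (imgOpen C hCsat hCo)),
      ⟨⟨a, haA, rfl⟩, ⟨b, hbB, rfl⟩, ⟨c, hcC, rfl⟩⟩⟩
    rintro ⟨u', v', w'⟩ ⟨⟨x, hxA, rfl⟩, ⟨y, hyB, rfl⟩, ⟨z, hzC, rfl⟩⟩
    show g (Quotient.mk s x) (Quotient.mk s y) (Quotient.mk s z) ∈ W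
    rw [hg x y z]
    exact hsub (Set.mk_mem_prod hxA (Set.mk_mem_prod hyB hzC))
end

section
/- Let S be a topological ternary semigroup whose underlying space is a k-space, and let I be a regular closed ideal of S. If S∖I° (the complement of the interior of I) is a k_w-space in the subspace topology, then the Rees quotient S/((I×I) ∪ Δ(S)), with the induced ternary multiplication and the quotient topology, is a topological ternary semigroup: it is Hausdorff and its induced ternary multiplication is continuous. -/
/-!
Open sets that contain `I` or miss it are saturated for the Rees congruence, so their images in
the quotient are open; regularity of `I` then separates points of the quotient.

For continuity at `(⟦a⟧, ⟦b⟧, ⟦c⟧)` the only hard case is `abc ∈ I`: given an open `O ⊇ I` one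
needs open `A ∋ a`, `B ∋ b`, `C ∋ c`, each containing `I`, with `ABC ⊆ O`. Exhaust the
`k_ω`-space `S ∖ I°` by increasing compact sets `Mₙ` and build, coordinatewise, open `Uₙ` and
compact `Fₙ` with `Uₙ ∩ Mₙ ⊆ Fₙ ⊆ Uₙ₊₁`, `I ∩ Mₙ₊₁ ⊆ Uₙ₊₁` and
`(F⁰ₙ ∪ {a})(F¹ₙ ∪ {b})(F²ₙ ∪ {c}) ⊆ O`; each step is a tube lemma, which applies because `I`
is an ideal inside `O`. The set `I° ∪ ⋃ₙ (Uₙ ∩ Mₙ)` is open, since its trace on every `Mₖ` is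
relatively open, and any product of three of its points lies in `O`, since the `Fₙ` increase.
-/

/-- A Hausdorff topological space `X` is a `k`-space if it has the weak topology
determined by its compact subspaces: a set `A ⊆ X` is closed whenever `A ∩ K` is closed
in `K` (with the subspace topology) for every compact `K ⊆ X`. -/
def IsKSpace (X : Type*) [TopologicalSpace X] : Prop :=
  ∀ A : Set X, (∀ K : Set X, IsCompact K → IsClosed (Subtype.val ⁻¹' A : Set K)) →
    IsClosed A

open Set Filter Topology

theorem exists_seq_of_forall_exists_succ {α : Type*} {P : ℕ → α → Prop}
    {R : ℕ → α → α → Prop} {x₀ : α} (h₀ : P 0 x₀)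
    (h : ∀ n x, P n x → ∃ y, P (n + 1) y ∧ R n x y) :
    ∃ f : ℕ → α, ∀ n, P n (f n) ∧ R n (f n) (f (n + 1)) := by
  choose next hnext using h
  let f : ∀ n, {x // P n x} := fun n =>
    Nat.rec ⟨x₀, h₀⟩ (fun n x => ⟨next n x x.2, (hnext n x x.2).1⟩) n
  exact ⟨fun n => (f n).1, fun n => ⟨(f n).2, (hnext n _ (f n).2).2⟩⟩

theorem IsCompact.ultrafilter_le_nhds_of_le_nhdsSet {X : Type*} [TopologicalSpace X]
    {K : Set X} (hK : IsCompact K) (𝒰 : Ultrafilter X) (h : ↑𝒰 ≤ 𝓝ˢ K) :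
    ∃ x ∈ K, ↑𝒰 ≤ 𝓝 x := by
  by_contra! hne
  have hdisj : Disjoint (↑𝒰) (𝓝ˢ K) :=
    hK.disjoint_nhdsSet_right.2 fun x hx => Ultrafilter.disjoint_iff_not_le.2 (hne x hx)
  exact 𝒰.neBot.ne (disjoint_self.1 (hdisj.mono_right h))

theorem exists_isOpen_pi_subset_of_isCompact {ι X : Type*} [Finite ι] [TopologicalSpace X]
    {K : ι → Set X} (hK : ∀ i, IsCompact (K i)) {W : Set (ι → X)} (hW : IsOpen W)
    (hKW : univ.pi K ⊆ W) :
    ∃ U : ι → Set X, (∀ i, IsOpen (U i)) ∧ (∀ i, K i ⊆ U i) ∧ univ.pi U ⊆ W := by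
  have hWpi : W ∈ Filter.pi fun i => 𝓝ˢ (K i) := by
    refine mem_iff_ultrafilter.2 fun 𝒰 h𝒰 => ?_
    choose x hxK hx using fun i => (hK i).ultrafilter_le_nhds_of_le_nhdsSet
      (𝒰.map fun x : ι → X => x i) ((tendsto_eval_pi _ i).mono_left h𝒰)
    exact tendsto_pi_nhds.2 hx (hW.mem_nhds (hKW fun i _ => hxK i))
  obtain ⟨J, -, t, ht, htW⟩ := Filter.mem_pi.1 hWpi
  choose U hUo hKU hUt using fun i => mem_nhdsSet_iff_exists.1 (ht i)
  exact ⟨U, hUo, hKU, fun x hx => htW fun i _ => hUt i (hx i trivial)⟩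

theorem exists_isOpen_isCompact_inter_subset {X : Type*} [TopologicalSpace X] [T2Space X]
    {K T G : Set X} (hK : IsCompact K) (hT : IsCompact T) (hG : IsOpen G) (hTG : T ⊆ G) :
    ∃ U F : Set X, IsOpen U ∧ IsCompact F ∧ T ⊆ U ∧ U ∩ K ⊆ F ∧ F ⊆ G := by
  obtain ⟨U, V, hU, hV, hTU, hKV, hUV⟩ := SeparatedNhds.of_isCompact_isCompact hT
    (hK.diff hG) (disjoint_left.2 fun x hxT hx => hx.2 (hTG hxT))
  refine ⟨U, K \ V, hU, hK.diff hV, hTU, fun x hx => ⟨hx.2, hUV.notMem_of_mem_left hx.1⟩, ?_⟩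
  intro x ⟨hxK, hxV⟩
  by_contra hxG
  exact hxV (hKV ⟨hxK, hxG⟩)

structure IsKwSequence {X : Type*} [TopologicalSpace X] (M : ℕ → Set X) : Prop where
  monotone : Monotone M
  isCompact : ∀ n, IsCompact (M n)
  isClosed_of_inter : ∀ A ⊆ ⋃ n, M n, (∀ n, IsClosed (A ∩ M n)) → IsClosed A

theorem IsKwSpace.exists_isKwSequence {X : Type*} [TopologicalSpace X] {C : Set X}
    (hC : IsClosed C) (h : IsKwSpace C) : ∃ M : ℕ → Set X, IsKwSequence M ∧ ⋃ n, M n = C := by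
  obtain ⟨K, hKc, hKcov, hKw⟩ := h
  set L : ℕ → Set X := fun n => Subtype.val '' K n
  have hLM : ∀ n, L n ⊆ accumulate L n := fun n => subset_accumulate
  have hunion : ⋃ n, accumulate L n = C := by
    rw [iUnion_accumulate, ← image_iUnion, hKcov, image_univ, Subtype.range_coe]
  refine ⟨accumulate L, ⟨monotone_accumulate,
    isCompact_accumulate fun n => (hKc n).image continuous_subtype_val, fun A hAC hA => ?_⟩,
    hunion⟩
  rw [hunion] at hAC
  have hAC' : IsClosed (Subtype.val ⁻¹' A : Set C) := hKw _ fun n => by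
    have : (Subtype.val ⁻¹' (Subtype.val ⁻¹' A) : Set (K n)) =
        (fun x : K n => (x : X)) ⁻¹' (A ∩ accumulate L n) := by
      ext x; exact ⟨fun hx => ⟨hx, hLM n ⟨x, x.2, rfl⟩⟩, And.left⟩
    rw [this]
    exact (hA n).preimage (continuous_subtype_val.comp continuous_subtype_val)
  have := hC.isClosedEmbedding_subtypeVal.isClosedMap _ hAC'
  rwa [Subtype.image_preimage_coe, inter_eq_right.2 hAC] at this

theorem monotone_inter_of_inter_subset_succ {X : Type*} {M U : ℕ → Set X} (hM : Monotone M)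
    (hUM : ∀ n, U n ∩ M n ⊆ U (n + 1)) : Monotone fun n => U n ∩ M n :=
  monotone_nat_of_le_succ fun n => subset_inter (hUM n) (inter_subset_right.trans (hM n.le_succ))

theorem exists_isOpen_isCompact_pi_insert_subset {X ι : Type*} [TopologicalSpace X] [T2Space X]
    [Finite ι] {I K : Set X} (hI : IsClosed I) (hK : IsCompact K) {W : Set (ι → X)}
    (hW : IsOpen W) (hWI : ∀ x : ι → X, (∃ i, x i ∈ I) → x ∈ W) {p : ι → X} {F : ι → Set X}
    (hF : ∀ i, IsCompact (F i)) (hFW : univ.pi (fun i => insert (p i) (F i)) ⊆ W) :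
    ∃ U F' : ι → Set X, (∀ i, IsOpen (U i) ∧ IsCompact (F' i) ∧ U i ∩ K ⊆ F' i ∧
      insert (p i) (F i ∪ I ∩ K) ⊆ U i) ∧ univ.pi (fun i => insert (p i) (F' i)) ⊆ W := by
  set T := fun i => insert (p i) (F i ∪ I ∩ K)
  have hT : ∀ i, IsCompact (T i) := fun i => ((hF i).union (hK.inter_left hI)).insert _
  have hTW : univ.pi T ⊆ W := by
    intro x hx
    by_cases h : ∃ i, x i ∈ I
    · exact hWI x h
    push Not at h
    refine hFW fun i _ => ?_
    rcases hx i trivial with hxi | hxi | hxi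
    · exact Or.inl hxi
    · exact Or.inr hxi
    · exact absurd hxi.1 (h i)
  obtain ⟨G, hGo, hTG, hGW⟩ := exists_isOpen_pi_subset_of_isCompact hT hW hTW
  choose U F' hU hF' hTU hUF' hF'G using
    fun i => exists_isOpen_isCompact_inter_subset hK (hT i) (hGo i) (hTG i)
  refine ⟨U, F', fun i => ⟨hU i, hF' i, hUF' i, hTU i⟩, fun x hx => hGW fun i _ => ?_⟩
  rcases hx i trivial with hxi | hxi
  · exact hTG i (hxi ▸ mem_insert _ _)
  · exact hF'G i hxi

namespace IsKwSequence

variable {X : Type*} [TopologicalSpace X] [T2Space X] {M : ℕ → Set X}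

theorem isOpen_compl_iUnion_union (hM : IsKwSequence M) {U : ℕ → Set X}
    (hU : ∀ n, IsOpen (U n)) (hUM : ∀ n, U n ∩ M n ⊆ U (n + 1)) :
    IsOpen ((⋃ n, M n)ᶜ ∪ ⋃ n, U n ∩ M n) := by
  have hmono := monotone_inter_of_inter_subset_succ hM.monotone hUM
  rw [← isClosed_compl_iff, compl_union, compl_compl]
  refine hM.isClosed_of_inter _ inter_subset_left fun k => ?_
  have : (⋃ n, M n) ∩ (⋃ n, U n ∩ M n)ᶜ ∩ M k = M k ∩ (⋃ n, U (k + n))ᶜ := by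
    ext x
    simp only [mem_inter_iff, mem_iUnion, mem_compl_iff, not_exists, not_and]
    constructor
    · rintro ⟨⟨-, hx⟩, hxk⟩
      exact ⟨hxk, fun n hxU => hx (k + n) hxU (hM.monotone (Nat.le_add_right k n) hxk)⟩
    · rintro ⟨hxk, hx⟩
      refine ⟨⟨⟨k, hxk⟩, fun n hxU hxn => ?_⟩, hxk⟩
      exact hx n (hmono (Nat.le_add_left n k) ⟨hxU, hxn⟩).1
  rw [this]
  exact (hM.isCompact k).isClosed.inter (isOpen_iUnion fun n => hU (k + n)).isClosed_compl

theorem exists_isOpen_pi_subset {ι : Type*} [Finite ι] (hM : IsKwSequence M) {I : Set X}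
    (hI : IsClosed I) (hMI : (⋃ n, M n)ᶜ ⊆ I) {W : Set (ι → X)} (hW : IsOpen W)
    (hWI : ∀ x : ι → X, (∃ i, x i ∈ I) → x ∈ W) {p : ι → X} (hp : p ∈ W) :
    ∃ A : ι → Set X, (∀ i, IsOpen (A i)) ∧ (∀ i, insert (p i) I ⊆ A i) ∧ univ.pi A ⊆ W := by
  obtain ⟨UF, hUF⟩ := exists_seq_of_forall_exists_succ
    (P := fun n UF => (∀ i, IsOpen (UF.1 i) ∧ IsCompact (UF.2 i) ∧ UF.1 i ∩ M n ⊆ UF.2 i) ∧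
      univ.pi (fun i => insert (p i) (UF.2 i)) ⊆ W)
    (R := fun n UF UF' => ∀ i, insert (p i) (UF.2 i ∪ I ∩ M (n + 1)) ⊆ UF'.1 i)
    (x₀ := ((fun _ => ∅, fun _ => ∅) : (ι → Set X) × (ι → Set X)))
    ⟨fun i => ⟨isOpen_empty, isCompact_empty, by simp⟩, by simpa [univ_pi_singleton] using hp⟩
    fun n UF hP => by
      obtain ⟨U, F', h, hW'⟩ := exists_isOpen_isCompact_pi_insert_subset hI
        (hM.isCompact (n + 1)) hW hWI (fun i => (hP.1 i).2.1) hP.2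
      exact ⟨(U, F'), ⟨fun i => ⟨(h i).1, (h i).2.1, (h i).2.2.1⟩, hW'⟩, fun i => (h i).2.2.2⟩
  set U := fun n => (UF n).1
  have hUM : ∀ i n, U n i ∩ M n ⊆ U (n + 1) i := fun i n =>
    ((hUF n).1.1 i).2.2.trans (subset_union_left.trans (subset_insert _ _)) |>.trans ((hUF n).2 i)
  refine ⟨fun i => (⋃ n, M n)ᶜ ∪ ⋃ n, U n i ∩ M n,
    fun i => hM.isOpen_compl_iUnion_union (fun n => ((hUF n).1.1 i).1) (hUM i),
    fun i x hx => ?_, fun x hx => ?_⟩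
  · by_cases hxM : x ∈ ⋃ n, M n
    · obtain ⟨n, hxn⟩ := mem_iUnion.1 hxM
      have hxn' := hM.monotone n.le_succ hxn
      refine Or.inr (mem_iUnion.2 ⟨n + 1, (hUF n).2 i ?_, hxn'⟩)
      rcases hx with rfl | hxI
      · exact mem_insert _ _
      · exact Or.inr (Or.inr ⟨hxI, hxn'⟩)
    · exact Or.inl hxM
  · by_cases h : ∃ i, x i ∈ I
    · exact hWI x h
    push Not at h
    have hx' : ∀ i, ∃ n, x i ∈ U n i ∩ M n := fun i => by
      rcases hx i trivial with hxM | hxU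
      · exact absurd (hMI hxM) (h i)
      · exact mem_iUnion.1 hxU
    choose n hn using hx'
    obtain ⟨N, hN⟩ := Finite.bddAbove_range n
    exact (hUF N).1.2 fun i _ => Or.inr (((hUF N).1.1 i).2.2
      (monotone_inter_of_inter_subset_succ hM.monotone (hUM i) (hN ⟨i, rfl⟩) (hn i)))

end IsKwSequence

section ReesQuotient

variable {S : Type*} {I : Set S} {s : Setoid S}

theorem preimage_image_mk_of_subset_or_disjoint
    (hrel : ∀ x y : S, s.r x y ↔ ((x ∈ I ∧ y ∈ I) ∨ x = y)) {A : Set S}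
    (hA : I ⊆ A ∨ Disjoint A I) : Quotient.mk s ⁻¹' (Quotient.mk s '' A) = A := by
  refine Subset.antisymm ?_ (subset_preimage_image _ _)
  rintro x ⟨y, hyA, hyx⟩
  rcases (hrel y x).1 (Quotient.exact hyx) with ⟨hyI, hxI⟩ | rfl
  · exact hA.elim (· hxI) fun hAI => absurd hyI (hAI.notMem_of_mem_left hyA)
  · exact hyA

theorem disjoint_image_mk_of_subset_or_disjoint
    (hrel : ∀ x y : S, s.r x y ↔ ((x ∈ I ∧ y ∈ I) ∨ x = y)) {A B : Set S}
    (hA : I ⊆ A ∨ Disjoint A I) (hAB : Disjoint A B) :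
    Disjoint (Quotient.mk s '' A) (Quotient.mk s '' B) := by
  refine disjoint_left.2 ?_
  rintro _ ⟨x, hx, rfl⟩ ⟨y, hy, hyx⟩
  have hyA : y ∈ Quotient.mk s ⁻¹' (Quotient.mk s '' A) := ⟨x, hx, hyx.symm⟩
  rw [preimage_image_mk_of_subset_or_disjoint hrel hA] at hyA
  exact disjoint_left.1 hAB hyA hy

variable [TopologicalSpace S]

theorem isOpen_image_mk_of_subset_or_disjoint
    (hrel : ∀ x y : S, s.r x y ↔ ((x ∈ I ∧ y ∈ I) ∨ x = y)) {A : Set S} (hAo : IsOpen A)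
    (hA : I ⊆ A ∨ Disjoint A I) : IsOpen (Quotient.mk s '' A) := by
  have hpre : IsOpen (Quotient.mk s ⁻¹' (Quotient.mk s '' A)) := by
    rwa [preimage_image_mk_of_subset_or_disjoint hrel hA]
  exact isQuotientMap_quotient_mk'.isOpen_preimage.1 hpre

theorem exists_isOpen_separation_of_notMem [T2Space S] (hI : IsClosed I)
    (hreg : ∀ x ∉ I, ∃ V W : Set S, IsOpen V ∧ IsOpen W ∧ x ∈ V ∧ I ⊆ W ∧ V ∩ W = ∅)
    {x y : S} (hy : y ∉ I) (hxy : x ≠ y) :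
    ∃ U V : Set S, IsOpen U ∧ IsOpen V ∧ x ∈ U ∧ y ∈ V ∧ Disjoint U V ∧
      (I ⊆ U ∨ Disjoint U I) ∧ Disjoint V I := by
  by_cases hx : x ∈ I
  · obtain ⟨V, W, hV, hW, hyV, hIW, hVW⟩ := hreg y hy
    have hVW' : Disjoint V W := disjoint_iff_inter_eq_empty.2 hVW
    exact ⟨W, V, hW, hV, hIW hx, hyV, hVW'.symm, Or.inl hIW, hVW'.mono_right hIW⟩
  · obtain ⟨U, V, hU, hV, hxU, hyV, hUV⟩ := t2_separation hxy
    exact ⟨U \ I, V \ I, hU.sdiff hI, hV.sdiff hI, ⟨hxU, hx⟩, ⟨hyV, hy⟩,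
      hUV.mono sdiff_subset sdiff_subset, Or.inr disjoint_sdiff_left, disjoint_sdiff_left⟩

theorem t2Space_quotient_of_regular [T2Space S]
    (hrel : ∀ x y : S, s.r x y ↔ ((x ∈ I ∧ y ∈ I) ∨ x = y)) (hI : IsClosed I)
    (hreg : ∀ x ∉ I, ∃ V W : Set S, IsOpen V ∧ IsOpen W ∧ x ∈ V ∧ I ⊆ W ∧ V ∩ W = ∅) :
    T2Space (Quotient s) := by
  have hsep : ∀ x y : S, y ∉ I → x ≠ y → ∃ u v : Set (Quotient s),
      IsOpen u ∧ IsOpen v ∧ Quotient.mk s x ∈ u ∧ Quotient.mk s y ∈ v ∧ Disjoint u v := by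
    intro x y hy hxy
    obtain ⟨U, V, hU, hV, hxU, hyV, hUV, hUI, hVI⟩ :=
      exists_isOpen_separation_of_notMem hI hreg hy hxy
    exact ⟨_, _, isOpen_image_mk_of_subset_or_disjoint hrel hU hUI,
      isOpen_image_mk_of_subset_or_disjoint hrel hV (Or.inr hVI), mem_image_of_mem _ hxU,
      mem_image_of_mem _ hyV, disjoint_image_mk_of_subset_or_disjoint hrel hUI hUV⟩
  refine ⟨fun u v => Quotient.inductionOn₂ u v fun x y hxy => ?_⟩
  have hne : ¬(x ∈ I ∧ y ∈ I) ∧ x ≠ y := by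
    rw [← not_or, ← hrel]
    exact fun h => hxy (Quotient.sound h)
  by_cases hy : y ∈ I
  · obtain ⟨u, v, hu, hv, hyu, hxv, huv⟩ := hsep y x (fun hx => hne.1 ⟨hx, hy⟩) hne.2.symm
    exact ⟨v, u, hv, hu, hxv, hyu, huv.symm⟩
  · exact hsep x y hy hne.2

end ReesQuotient

section Ternary

variable {S : Type*} [TopologicalSpace S] {m : S → S → S → S} {I : Set S}

theorem exists_isOpen_ternary_subset_of_isKwSequence [T2Space S]
    (hm : Continuous fun p : S × S × S => m p.1 p.2.1 p.2.2) (hI : IsClosed I)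
    (hideal : ∀ a b : S, ∀ x ∈ I, m a b x ∈ I ∧ m a x b ∈ I ∧ m x a b ∈ I)
    {M : ℕ → Set S} (hM : IsKwSequence M) (hMI : (⋃ n, M n)ᶜ ⊆ I) {O : Set S} (hO : IsOpen O)
    (hIO : I ⊆ O) {a b c : S} (habc : m a b c ∈ O) :
    ∃ A B C : Set S, IsOpen A ∧ IsOpen B ∧ IsOpen C ∧
      insert a I ⊆ A ∧ insert b I ⊆ B ∧ insert c I ⊆ C ∧
      ∀ x ∈ A, ∀ y ∈ B, ∀ z ∈ C, m x y z ∈ O := by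
  set W : Set (Fin 3 → S) := {x | m (x 0) (x 1) (x 2) ∈ O}
  have hW : IsOpen W :=
    hO.preimage (hm.comp (by fun_prop : Continuous fun x : Fin 3 → S => (x 0, x 1, x 2)))
  have hWI : ∀ x : Fin 3 → S, (∃ i, x i ∈ I) → x ∈ W := by
    rintro x ⟨i, hi⟩
    apply hIO
    fin_cases i
    exacts [(hideal _ _ _ hi).2.2, (hideal _ _ _ hi).2.1, (hideal _ _ _ hi).1]
  obtain ⟨A, hA, hpA, hAW⟩ := hM.exists_isOpen_pi_subset hI hMI hW hWI (p := ![a, b, c]) habc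
  refine ⟨A 0, A 1, A 2, hA 0, hA 1, hA 2, hpA 0, hpA 1, hpA 2,
    fun x hx y hy z hz => hAW (a := ![x, y, z]) fun i _ => ?_⟩
  fin_cases i <;> assumption

theorem exists_isOpen_ternary_subset_of_subset_or_disjoint [T2Space S]
    (hm : Continuous fun p : S × S × S => m p.1 p.2.1 p.2.2) (hI : IsClosed I)
    (hideal : ∀ a b : S, ∀ x ∈ I, m a b x ∈ I ∧ m a x b ∈ I ∧ m x a b ∈ I)
    {M : ℕ → Set S} (hM : IsKwSequence M) (hMI : (⋃ n, M n)ᶜ ⊆ I)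
    {O : Set S} (hO : IsOpen O) {a b c : S} (habc : m a b c ∈ O) (hIO : m a b c ∈ I → I ⊆ O) :
    ∃ A B C : Set S, IsOpen A ∧ IsOpen B ∧ IsOpen C ∧ a ∈ A ∧ b ∈ B ∧ c ∈ C ∧
      (I ⊆ A ∨ Disjoint A I) ∧ (I ⊆ B ∨ Disjoint B I) ∧ (I ⊆ C ∨ Disjoint C I) ∧
      ∀ x ∈ A, ∀ y ∈ B, ∀ z ∈ C, m x y z ∈ O := by
  by_cases habcI : m a b c ∈ I
  · obtain ⟨A, B, C, hA, hB, hC, hA', hB', hC', hABC⟩ :=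
      exists_isOpen_ternary_subset_of_isKwSequence hm hI hideal hM hMI hO (hIO habcI) habc
    exact ⟨A, B, C, hA, hB, hC, hA' (mem_insert _ _), hB' (mem_insert _ _),
      hC' (mem_insert _ _), Or.inl ((subset_insert _ _).trans hA'),
      Or.inl ((subset_insert _ _).trans hB'), Or.inl ((subset_insert _ _).trans hC'), hABC⟩
  · obtain ⟨A, BC, hA, hBC, ha, hbc, hABC⟩ := isOpen_prod_iff.1 (hO.preimage hm) a (b, c) habc
    obtain ⟨B, C, hB, hC, hb, hc, hBC'⟩ := isOpen_prod_iff.1 hBC b c hbc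
    refine ⟨A \ I, B \ I, C \ I, hA.sdiff hI, hB.sdiff hI, hC.sdiff hI,
      ⟨ha, fun h => habcI (hideal b c a h).2.2⟩, ⟨hb, fun h => habcI (hideal a c b h).2.1⟩,
      ⟨hc, fun h => habcI (hideal a b c h).1⟩, Or.inr disjoint_sdiff_left,
      Or.inr disjoint_sdiff_left, Or.inr disjoint_sdiff_left, fun x hx y hy z hz => ?_⟩
    exact hABC (mk_mem_prod hx.1 (hBC' (mk_mem_prod hy.1 hz.1)))

theorem continuous_quotient_ternary [T2Space S] {s : Setoid S}
    (hrel : ∀ x y : S, s.r x y ↔ ((x ∈ I ∧ y ∈ I) ∨ x = y))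
    {g : Quotient s → Quotient s → Quotient s → Quotient s}
    (hg : ∀ a b c : S, g (Quotient.mk s a) (Quotient.mk s b) (Quotient.mk s c)
      = Quotient.mk s (m a b c))
    (hm : Continuous fun p : S × S × S => m p.1 p.2.1 p.2.2) (hI : IsClosed I)
    (hideal : ∀ a b : S, ∀ x ∈ I, m a b x ∈ I ∧ m a x b ∈ I ∧ m x a b ∈ I)
    {M : ℕ → Set S} (hM : IsKwSequence M) (hMI : (⋃ n, M n)ᶜ ⊆ I) :
    Continuous fun p : Quotient s × Quotient s × Quotient s => g p.1 p.2.1 p.2.2 := by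
  rw [continuous_iff_continuousAt]
  rintro ⟨u, v, w⟩
  obtain ⟨a, rfl⟩ := Quotient.exists_rep u
  obtain ⟨b, rfl⟩ := Quotient.exists_rep v
  obtain ⟨c, rfl⟩ := Quotient.exists_rep w
  refine (nhds_basis_opens _).tendsto_right_iff.2 fun U ⟨hmem, hU⟩ => ?_
  have habc : m a b c ∈ Quotient.mk s ⁻¹' U :=
    show Quotient.mk s (m a b c) ∈ U by simpa only [hg] using hmem
  have hIU : m a b c ∈ I → I ⊆ Quotient.mk s ⁻¹' U := fun habcI x hx => by
    rwa [mem_preimage, Quotient.sound ((hrel x _).2 (Or.inl ⟨hx, habcI⟩))]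
  obtain ⟨A, B, C, hA, hB, hC, ha, hb, hc, hAI, hBI, hCI, hABC⟩ :=
    exists_isOpen_ternary_subset_of_subset_or_disjoint hm hI hideal hM hMI
      (hU.preimage continuous_quotient_mk') habc hIU
  have hopen : ∀ {A : Set S}, IsOpen A → (I ⊆ A ∨ Disjoint A I) →
      IsOpen (Quotient.mk s '' A) :=
    isOpen_image_mk_of_subset_or_disjoint hrel
  refine mem_of_superset (prod_mem_nhds ((hopen hA hAI).mem_nhds (mem_image_of_mem _ ha))
    (prod_mem_nhds ((hopen hB hBI).mem_nhds (mem_image_of_mem _ hb))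
      ((hopen hC hCI).mem_nhds (mem_image_of_mem _ hc)))) ?_
  rintro ⟨_, _, _⟩ ⟨⟨x, hx, rfl⟩, ⟨y, hy, rfl⟩, ⟨z, hz, rfl⟩⟩
  show g (Quotient.mk s x) (Quotient.mk s y) (Quotient.mk s z) ∈ U
  rw [hg]
  exact hABC x hx y hy z hz

end Ternary

theorem rees_quotient_topological_ternary_semigroup_of_kSpace_general {S : Type*}
    [TopologicalSpace S] [T2Space S] (m : S → S → S → S)
    (hm : Continuous fun p : S × S × S => m p.1 p.2.1 p.2.2)
    (I : Set S) (hIclosed : IsClosed I)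
    (hideal : ∀ a b : S, ∀ x ∈ I, m a b x ∈ I ∧ m a x b ∈ I ∧ m x a b ∈ I)
    (hreg : ∀ x ∉ I, ∃ V W : Set S,
      IsOpen V ∧ IsOpen W ∧ x ∈ V ∧ I ⊆ W ∧ V ∩ W = ∅)
    (hkw : IsKwSpace ((interior I)ᶜ : Set S))
    (s : Setoid S)
    (hrel : ∀ x y : S, s.r x y ↔ ((x ∈ I ∧ y ∈ I) ∨ x = y))
    (g : Quotient s → Quotient s → Quotient s → Quotient s)
    (hg : ∀ a b c : S, g (Quotient.mk s a) (Quotient.mk s b) (Quotient.mk s c)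
      = Quotient.mk s (m a b c)) :
    T2Space (Quotient s) ∧
      Continuous fun p : Quotient s × Quotient s × Quotient s => g p.1 p.2.1 p.2.2 := by
  obtain ⟨M, hM, hMC⟩ := hkw.exists_isKwSequence isOpen_interior.isClosed_compl
  have hMI : (⋃ n, M n)ᶜ ⊆ I := by
    rw [hMC, compl_compl]
    exact interior_subset
  exact ⟨t2Space_quotient_of_regular hrel hIclosed hreg,
    continuous_quotient_ternary hrel hg hm hIclosed hideal hM hMI⟩

/-- Let `S` be a topological ternary semigroup whose underlying space
is a `k`-space and let `I` be a regular closed ideal of `S`.  If `S ∖ I°` is a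
`k_w`-space in the subspace topology, then the Rees quotient `S/((I×I) ∪ Δ(S))`, with
the induced ternary multiplication and the quotient topology, is a topological ternary
semigroup: it is Hausdorff and the induced multiplication is continuous. -/
theorem rees_quotient_topological_ternary_semigroup_of_kSpace {S : Type*}
    [TopologicalSpace S] [T2Space S] (m : S → S → S → S)
    (hassoc : ∀ a b c d e : S, m (m a b c) d e = m a (m b c d) e ∧
      m a (m b c d) e = m a b (m c d e))
    (hm : Continuous fun p : S × S × S => m p.1 p.2.1 p.2.2)
    (hk : IsKSpace S)
    (I : Set S) (hne : I.Nonempty) (hIclosed : IsClosed I)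
    (hideal : ∀ a b : S, ∀ x ∈ I, m a b x ∈ I ∧ m a x b ∈ I ∧ m x a b ∈ I)
    (hreg : ∀ x ∉ I, ∃ V W : Set S,
      IsOpen V ∧ IsOpen W ∧ x ∈ V ∧ I ⊆ W ∧ V ∩ W = ∅)
    (hkw : IsKwSpace ((interior I)ᶜ : Set S))
    (s : Setoid S)
    (hrel : ∀ x y : S, s.r x y ↔ ((x ∈ I ∧ y ∈ I) ∨ x = y))
    (g : Quotient s → Quotient s → Quotient s → Quotient s)
    (hg : ∀ a b c : S, g (Quotient.mk s a) (Quotient.mk s b) (Quotient.mk s c)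
      = Quotient.mk s (m a b c)) :
    T2Space (Quotient s) ∧
      Continuous fun p : Quotient s × Quotient s × Quotient s => g p.1 p.2.1 p.2.2 :=
  rees_quotient_topological_ternary_semigroup_of_kSpace_general m hm I hIclosed hideal hreg hkw s
    hrel g hg
end

section
/- Let S be a topological ternary group and H a ternary subgroup of S. If H is open in S, then H is closed in S. -/
/-- Let `S` be a topological ternary group and `H` a ternary subgroup
of `S`.  If `H` is open in `S`, then `H` is closed in `S`. -/
theorem ternary_subgroup_closed_of_open {S : Type*} [TopologicalSpace S] [T2Space S]
    (m : S → S → S → S) (inv : S → S)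
    (hassoc : ∀ a b c d e : S, m (m a b c) d e = m a (m b c d) e ∧
      m a (m b c d) e = m a b (m c d e))
    (hinv : ∀ x y : S, m x (inv x) y = y ∧ m (inv x) x y = y ∧
      m y x (inv x) = y ∧ m y (inv x) x = y)
    (hm : Continuous fun p : S × S × S => m p.1 p.2.1 p.2.2)
    (hi : Continuous inv)
    (H : Set S) (hne : H.Nonempty)
    (hmul : ∀ a ∈ H, ∀ b ∈ H, ∀ c ∈ H, m a b c ∈ H)
    (hinvH : ∀ a ∈ H, inv a ∈ H)
    (hopen : IsOpen H) :
    IsClosed H := by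
  obtain ⟨a, ha⟩ := hne
  rw [← isOpen_compl_iff, isOpen_iff_forall_mem_open]
  intro x hx
  refine ⟨{z | m (inv a) (inv x) z ∈ H}, ?_, ?_, ?_⟩
  · -- disjoint from H
    intro z hz hzH
    apply hx
    set h := m (inv a) (inv x) z with hh_def
    have hh : h ∈ H := hz
    have hz_eq : z = m x a h := by
      rw [hh_def, ← (hassoc x a (inv a) (inv x) z).2, (hinv a (inv x)).1,
        (hinv x z).1]
    have key : x = m z (inv h) (inv a) := by
      rw [hz_eq, (hassoc x a h (inv h) (inv a)).1, (hinv h a).2.2.1,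
        (hinv a x).2.2.1]
    rw [key]
    exact hmul z hzH _ (hinvH _ hh) _ (hinvH a ha)
  · -- open
    exact hopen.preimage (hm.comp
      (continuous_const.prodMk (continuous_const.prodMk continuous_id)))
  · -- contains x
    show m (inv a) (inv x) x ∈ H
    rw [(hinv x (inv a)).2.2.2]
    exact hinvH a ha
end

section
/- Let S be a topological ternary group and H a closed ternary subgroup of S. Then the relation ρ = {(x,y) ∈ S×S : xHH = yHH}, where aHH = {a h₁ h₂ : h₁, h₂ ∈ H}, is a closed subset of S×S. -/
/-- The left coset `aHH = {a h₁ h₂ : h₁, h₂ ∈ H}` of a subset `H` with respect to the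
ternary multiplication `m`. -/
def ternaryCoset {S : Type*} (m : S → S → S → S) (H : Set S) (a : S) : Set S :=
  {w : S | ∃ h₁ ∈ H, ∃ h₂ ∈ H, w = m a h₁ h₂}

/-- If `y ∈ xHH`, then `xHH = yHH`. -/
lemma ternaryCoset_eq_of_mem {S : Type*} (m : S → S → S → S) (inv : S → S)
    (hassoc : ∀ a b c d e : S, m (m a b c) d e = m a (m b c d) e ∧
      m a (m b c d) e = m a b (m c d e))
    (hinv : ∀ x y : S, m x (inv x) y = y ∧ m (inv x) x y = y ∧
      m y x (inv x) = y ∧ m y (inv x) x = y)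
    (H : Set S)
    (hmul : ∀ a ∈ H, ∀ b ∈ H, ∀ c ∈ H, m a b c ∈ H)
    (hinvH : ∀ a ∈ H, inv a ∈ H)
    {x y : S} (hy : y ∈ ternaryCoset m H x) :
    ternaryCoset m H x = ternaryCoset m H y := by
  obtain ⟨h₁, hh₁, h₂, hh₂, rfl⟩ := hy
  ext w
  constructor
  · rintro ⟨a, ha, b, hb, rfl⟩
    refine ⟨inv h₂, hinvH _ hh₂, m (inv h₁) a b, hmul _ (hinvH _ hh₁) _ ha _ hb, ?_⟩
    calc m x a b = m x (m h₁ (inv h₁) a) b := by rw [(hinv h₁ a).1]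
      _ = m x h₁ (m (inv h₁) a b) := (hassoc x h₁ (inv h₁) a b).2
      _ = m x (m h₁ h₂ (inv h₂)) (m (inv h₁) a b) := by rw [(hinv h₂ h₁).2.2.1]
      _ = m (m x h₁ h₂) (inv h₂) (m (inv h₁) a b) := ((hassoc x h₁ h₂ (inv h₂) _).1).symm
  · rintro ⟨a, ha, b, hb, rfl⟩
    refine ⟨h₁, hh₁, m h₂ a b, hmul _ hh₂ _ ha _ hb, ?_⟩
    exact (hassoc x h₁ h₂ a b).1.trans (hassoc x h₁ h₂ a b).2

/-- Let `S` be a topological ternary group and `H` a closed ternary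
subgroup of `S`.  Then the relation `ρ = {(x,y) : xHH = yHH}` is a closed subset of
`S × S`. -/
theorem ternary_coset_relation_closed {S : Type*} [TopologicalSpace S] [T2Space S]
    (m : S → S → S → S) (inv : S → S)
    (hassoc : ∀ a b c d e : S, m (m a b c) d e = m a (m b c d) e ∧
      m a (m b c d) e = m a b (m c d e))
    (hinv : ∀ x y : S, m x (inv x) y = y ∧ m (inv x) x y = y ∧
      m y x (inv x) = y ∧ m y (inv x) x = y)
    (hm : Continuous fun p : S × S × S => m p.1 p.2.1 p.2.2)
    (hi : Continuous inv)
    (H : Set S) (hne : H.Nonempty)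
    (hmul : ∀ a ∈ H, ∀ b ∈ H, ∀ c ∈ H, m a b c ∈ H)
    (hinvH : ∀ a ∈ H, inv a ∈ H)
    (hHclosed : IsClosed H) :
    IsClosed {p : S × S | ternaryCoset m H p.1 = ternaryCoset m H p.2} := by
  obtain ⟨h₀, hh₀⟩ := hne
  have key : {p : S × S | ternaryCoset m H p.1 = ternaryCoset m H p.2} =
      (fun p : S × S => m (inv p.1) p.2 (inv h₀)) ⁻¹' H := by
    ext ⟨x, y⟩
    simp only [Set.mem_setOf_eq, Set.mem_preimage]
    constructor
    · intro h
      have hyy : y ∈ ternaryCoset m H y :=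
        ⟨h₀, hh₀, inv h₀, hinvH _ hh₀, ((hinv h₀ y).2.2.1).symm⟩
      rw [← h] at hyy
      obtain ⟨h₁, hh₁, h₂, hh₂, rfl⟩ := hyy
      have heq : m (inv x) (m x h₁ h₂) (inv h₀) = m h₁ h₂ (inv h₀) := by
        rw [← (hassoc (inv x) x h₁ h₂ (inv h₀)).1, (hinv x h₁).2.1]
      rw [heq]
      exact hmul _ hh₁ _ hh₂ _ (hinvH _ hh₀)
    · intro h
      have hy : y = m x (m (inv x) y (inv h₀)) h₀ :=
        calc y = m y (inv h₀) h₀ := ((hinv h₀ y).2.2.2).symm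
          _ = m (m x (inv x) y) (inv h₀) h₀ := by rw [(hinv x y).1]
          _ = m x (m (inv x) y (inv h₀)) h₀ := (hassoc x (inv x) y (inv h₀) h₀).1
      exact ternaryCoset_eq_of_mem m inv hassoc hinv H hmul hinvH
        ⟨m (inv x) y (inv h₀), h, h₀, hh₀, hy⟩
  rw [key]
  exact hHclosed.preimage (hm.comp ((hi.comp continuous_fst).prodMk
    (continuous_snd.prodMk (hi.comp continuous_const))))
end

section
/- Let S be a topological ternary group and H a ternary subgroup of S. Then the natural map π_H : S → S/H, π_H(x) = xHH, is an open map, where S/H = {xHH : x ∈ S} carries the quotient topology (𝒰 ⊆ S/H is open iff π_H^{-1}(𝒰) is open in S); equivalently, for every open U ⊆ S the set π_H^{-1}(π_H(U)) = UHH is open in S. -/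
/-- Let `S` be a topological ternary group and `H` a ternary subgroup
of `S`.  Then the natural map `π_H : S → S/H`, `x ↦ xHH`, is an open map, where `S/H`
carries the quotient topology; equivalently, for every open `U ⊆ S` the set
`UHH = π_H⁻¹(π_H(U))` is open in `S`. -/
theorem ternary_coset_quotient_map_isOpenMap {S : Type*} [TopologicalSpace S] [T2Space S]
    (m : S → S → S → S) (inv : S → S)
    (hassoc : ∀ a b c d e : S, m (m a b c) d e = m a (m b c d) e ∧
      m a (m b c d) e = m a b (m c d e))
    (hinv : ∀ x y : S, m x (inv x) y = y ∧ m (inv x) x y = y ∧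
      m y x (inv x) = y ∧ m y (inv x) x = y)
    (hm : Continuous fun p : S × S × S => m p.1 p.2.1 p.2.2)
    (hi : Continuous inv)
    (H : Set S) (hne : H.Nonempty)
    (hmul : ∀ a ∈ H, ∀ b ∈ H, ∀ c ∈ H, m a b c ∈ H)
    (hinvH : ∀ a ∈ H, inv a ∈ H) :
    IsOpenMap (Quotient.mk (Setoid.ker (ternaryCoset m H))) ∧
    ∀ U : Set S, IsOpen U →
      IsOpen {w : S | ∃ u ∈ U, ∃ h₁ ∈ H, ∃ h₂ ∈ H, w = m u h₁ h₂} := by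
  -- cancellation lemmas
  have cancA : ∀ u h₁ h₂ : S, m (m u h₁ h₂) (inv h₂) (inv h₁) = u := by
    intro u h₁ h₂
    rw [(hassoc u h₁ h₂ (inv h₂) (inv h₁)).1, (hinv h₂ h₁).2.2.1, (hinv h₁ u).2.2.1]
  have cancB : ∀ w h₁ h₂ : S, m (m w (inv h₂) (inv h₁)) h₁ h₂ = w := by
    intro w h₁ h₂
    rw [(hassoc w (inv h₂) (inv h₁) h₁ h₂).1, (hinv h₁ (inv h₂)).2.2.2, (hinv h₂ w).2.2.2]
  have key : ∀ U : Set S, IsOpen U →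
      IsOpen {w : S | ∃ u ∈ U, ∃ h₁ ∈ H, ∃ h₂ ∈ H, w = m u h₁ h₂} := by
    intro U hU
    have heq : {w : S | ∃ u ∈ U, ∃ h₁ ∈ H, ∃ h₂ ∈ H, w = m u h₁ h₂}
        = ⋃ h₁ ∈ H, ⋃ h₂ ∈ H, (fun w => m w (inv h₂) (inv h₁)) ⁻¹' U := by
      ext w
      simp only [Set.mem_setOf_eq, Set.mem_iUnion, Set.mem_preimage]
      constructor
      · rintro ⟨u, hu, h₁, h1, h₂, h2, rfl⟩
        exact ⟨h₁, h1, h₂, h2, by rwa [cancA]⟩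
      · rintro ⟨h₁, h1, h₂, h2, hw⟩
        exact ⟨m w (inv h₂) (inv h₁), hw, h₁, h1, h₂, h2, (cancB w h₁ h₂).symm⟩
    rw [heq]
    refine isOpen_biUnion fun h₁ _ => isOpen_biUnion fun h₂ _ => ?_
    exact hU.preimage (hm.comp (continuous_id.prodMk
      (continuous_const.prodMk continuous_const)))
  -- membership in own coset
  have mem_self : ∀ x : S, x ∈ ternaryCoset m H x := by
    intro x
    obtain ⟨h, hh⟩ := hne
    exact ⟨h, hh, inv h, hinvH h hh, ((hinv h x).2.2.1).symm⟩
  -- coset equality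
  have coset_eq : ∀ u h₁ h₂, h₁ ∈ H → h₂ ∈ H →
      ternaryCoset m H (m u h₁ h₂) = ternaryCoset m H u := by
    intro u h₁ h₂ h1 h2
    ext w
    constructor
    · rintro ⟨k₁, hk1, k₂, hk2, rfl⟩
      exact ⟨m h₁ h₂ k₁, hmul _ h1 _ h2 _ hk1, k₂, hk2, (hassoc u h₁ h₂ k₁ k₂).1 ▸ rfl⟩
    · rintro ⟨k₁, hk1, k₂, hk2, rfl⟩
      refine ⟨m (inv h₂) (inv h₁) k₁, hmul _ (hinvH _ h2) _ (hinvH _ h1) _ hk1, k₂, hk2, ?_⟩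
      rw [← (hassoc (m u h₁ h₂) (inv h₂) (inv h₁) k₁ k₂).1, cancA]
  refine ⟨?_, key⟩
  intro U hU
  have hpre : Quotient.mk (Setoid.ker (ternaryCoset m H)) ⁻¹'
      (Quotient.mk (Setoid.ker (ternaryCoset m H)) '' U)
      = {w : S | ∃ u ∈ U, ∃ h₁ ∈ H, ∃ h₂ ∈ H, w = m u h₁ h₂} := by
    ext x
    simp only [Set.mem_preimage, Set.mem_image, Set.mem_setOf_eq]
    constructor
    · rintro ⟨u, hu, huv⟩
      have hcos : ternaryCoset m H u = ternaryCoset m H x := Quotient.eq''.mp huv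
      have := mem_self x
      rw [← hcos] at this
      obtain ⟨h₁, h1, h₂, h2, hx⟩ := this
      exact ⟨u, hu, h₁, h1, h₂, h2, hx⟩
    · rintro ⟨u, hu, h₁, h1, h₂, h2, rfl⟩
      exact ⟨u, hu, Quotient.sound ((coset_eq u h₁ h₂ h1 h2).symm)⟩
  have : IsOpen (Quotient.mk (Setoid.ker (ternaryCoset m H)) ⁻¹'
      (Quotient.mk (Setoid.ker (ternaryCoset m H)) '' U)) := by
    rw [hpre]; exact key U hU
  exact isOpen_coinduced.mpr this
end

section
/- Let S be a topological ternary group and H a closed normal ternary subgroup of S. Then S/H = {xHH : x ∈ S}, equipped with the ternary multiplication (xHH, yHH, zHH) ↦ (xyz)HH and the quotient topology induced by π_H : S → S/H, π_H(x) = xHH, is a topological ternary group: S/H is Hausdorff, the induced ternary multiplication is continuous, and the inversion map xHH ↦ x⁻¹HH is continuous. -/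
/-- Let `S` be a topological ternary group and `H` a closed normal
ternary subgroup of `S`.  Then `S/H = {xHH : x ∈ S}`, with the induced ternary
multiplication `(xHH, yHH, zHH) ↦ (xyz)HH`, the induced inversion `xHH ↦ x⁻¹HH`, and
the quotient topology, is a topological ternary group: it is Hausdorff, the induced
ternary multiplication is continuous and the induced inversion is continuous. -/
theorem quotient_by_normal_ternary_subgroup_is_topological_ternary_group {S : Type*}
    [TopologicalSpace S] [T2Space S] (m : S → S → S → S) (inv : S → S)
    (hassoc : ∀ a b c d e : S, m (m a b c) d e = m a (m b c d) e ∧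
      m a (m b c d) e = m a b (m c d e))
    (hinv : ∀ x y : S, m x (inv x) y = y ∧ m (inv x) x y = y ∧
      m y x (inv x) = y ∧ m y (inv x) x = y)
    (hm : Continuous fun p : S × S × S => m p.1 p.2.1 p.2.2)
    (hi : Continuous inv)
    (H : Set S) (hne : H.Nonempty)
    (hmul : ∀ a ∈ H, ∀ b ∈ H, ∀ c ∈ H, m a b c ∈ H)
    (hinvH : ∀ a ∈ H, inv a ∈ H)
    (hHclosed : IsClosed H)
    (hnormal : ∀ g h : S, {w : S | ∃ k ∈ H, w = m g h k} = {w : S | ∃ k ∈ H, w = m k g h})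
    (g3 : Quotient (Setoid.ker (ternaryCoset m H)) →
      Quotient (Setoid.ker (ternaryCoset m H)) →
      Quotient (Setoid.ker (ternaryCoset m H)) →
      Quotient (Setoid.ker (ternaryCoset m H)))
    (hg3 : ∀ x y z : S, g3 (Quotient.mk _ x) (Quotient.mk _ y) (Quotient.mk _ z)
      = Quotient.mk _ (m x y z))
    (j : Quotient (Setoid.ker (ternaryCoset m H)) →
      Quotient (Setoid.ker (ternaryCoset m H)))
    (hj : ∀ x : S, j (Quotient.mk _ x) = Quotient.mk _ (inv x)) :
    T2Space (Quotient (Setoid.ker (ternaryCoset m H))) ∧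
    (Continuous fun p : Quotient (Setoid.ker (ternaryCoset m H)) ×
        Quotient (Setoid.ker (ternaryCoset m H)) ×
        Quotient (Setoid.ker (ternaryCoset m H)) => g3 p.1 p.2.1 p.2.2) ∧
    Continuous j := by
  letI : Setoid S := Setoid.ker (ternaryCoset m H)
  obtain ⟨h₀, hh₀⟩ := hne
  have assoc1 : ∀ a b c d e : S, m (m a b c) d e = m a (m b c d) e :=
    fun a b c d e => (hassoc a b c d e).1
  have assoc2 : ∀ a b c d e : S, m a (m b c d) e = m a b (m c d e) :=
    fun a b c d e => (hassoc a b c d e).2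
  set π : S → Quotient (Setoid.ker (ternaryCoset m H)) :=
    Quotient.mk (Setoid.ker (ternaryCoset m H)) with hπ
  -- membership characterization
  have memIff : ∀ x y : S, y ∈ ternaryCoset m H x ↔ m (inv x) y h₀ ∈ H := by
    intro x y
    constructor
    · rintro ⟨h₁, hh₁, h₂, hh₂, rfl⟩
      have : m (inv x) (m x h₁ h₂) h₀ = m h₁ h₂ h₀ := by
        rw [← assoc1, (hinv x h₁).2.1]
      rw [this]; exact hmul _ hh₁ _ hh₂ _ hh₀
    · intro hk
      refine ⟨_, hk, _, hinvH _ hh₀, ?_⟩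
      rw [← assoc1, (hinv x y).1, (hinv h₀ y).2.2.1]
  have selfMem : ∀ x : S, x ∈ ternaryCoset m H x := by
    intro x
    exact ⟨h₀, hh₀, inv h₀, hinvH _ hh₀, ((hinv h₀ x).2.2.1).symm⟩
  have cosetEq_of_mem : ∀ x y : S, y ∈ ternaryCoset m H x →
      ternaryCoset m H x = ternaryCoset m H y := by
    rintro x y ⟨h₁, hh₁, h₂, hh₂, rfl⟩
    ext w
    constructor
    · rintro ⟨a, ha, b, hb, rfl⟩
      refine ⟨m (inv h₂) (inv h₁) a, hmul _ (hinvH _ hh₂) _ (hinvH _ hh₁) _ ha, b, hb, ?_⟩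
      rw [assoc1, ← assoc2 h₁ h₂ (inv h₂) (inv h₁) a, (hinv h₂ (inv h₁)).1, (hinv h₁ a).1]
    · rintro ⟨a, ha, b, hb, rfl⟩
      exact ⟨m h₁ h₂ a, hmul _ hh₁ _ hh₂ _ ha, b, hb, assoc1 x h₁ h₂ a b⟩
  have kerIff : ∀ x y : S, ternaryCoset m H x = ternaryCoset m H y ↔ m (inv x) y h₀ ∈ H := by
    intro x y
    constructor
    · intro h
      exact (memIff x y).1 (h ▸ selfMem y)
    · intro h
      exact cosetEq_of_mem x y ((memIff x y).2 h)
  -- openness of the quotient map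
  have hopen : IsOpenMap π := by
    intro U hU
    have hq : Topology.IsQuotientMap π := isQuotientMap_quotient_mk'
    rw [← hq.isOpen_preimage]
    have heq : π ⁻¹' (π '' U) =
        ⋃ h₁ ∈ H, ⋃ h₂ ∈ H, (fun y => m y h₁ h₂) ⁻¹' U := by
      ext y
      simp only [Set.mem_preimage, Set.mem_image, Set.mem_iUnion]
      constructor
      · rintro ⟨x, hxU, hxy⟩
        have hx : ternaryCoset m H x = ternaryCoset m H y := Quotient.exact hxy
        have : x ∈ ternaryCoset m H y := hx ▸ selfMem x
        obtain ⟨h₁, hh₁, h₂, hh₂, hxe⟩ := this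
        exact ⟨h₁, hh₁, h₂, hh₂, hxe ▸ hxU⟩
      · rintro ⟨h₁, hh₁, h₂, hh₂, hmem⟩
        refine ⟨m y h₁ h₂, hmem, ?_⟩
        exact (Quotient.sound (cosetEq_of_mem y _ ⟨h₁, hh₁, h₂, hh₂, rfl⟩)).symm
    rw [heq]
    exact isOpen_biUnion fun h₁ _ => isOpen_biUnion fun h₂ _ =>
      (hm.comp (continuous_id.prodMk (continuous_const.prodMk continuous_const))).isOpen_preimage
        U hU
  have hoq : IsOpenQuotientMap π :=
    ⟨fun q => Quotient.exists_rep q, continuous_quotient_mk', hopen⟩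
  refine ⟨?_, ?_, ?_⟩
  · -- T2
    have hRclosed : IsClosed {p : S × S | m (inv p.1) p.2 h₀ ∈ H} :=
      hHclosed.preimage (hm.comp ((hi.comp continuous_fst).prodMk
        (continuous_snd.prodMk continuous_const)))
    refine ⟨fun a b hab => ?_⟩
    obtain ⟨x, rfl⟩ := Quotient.exists_rep a
    obtain ⟨y, rfl⟩ := Quotient.exists_rep b
    have hxy : m (inv x) y h₀ ∉ H := fun h =>
      hab (Quotient.sound ((kerIff x y).2 h))
    obtain ⟨U, V, hU, hV, hxU, hyV, hUV⟩ :=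
      isOpen_prod_iff.1 hRclosed.isOpen_compl x y hxy
    refine ⟨π '' U, π '' V, hopen U hU, hopen V hV, ⟨x, hxU, rfl⟩, ⟨y, hyV, rfl⟩, ?_⟩
    rw [Set.disjoint_left]
    rintro c ⟨u, hu, rfl⟩ ⟨v, hv, hvu⟩
    have hvc : ternaryCoset m H v = ternaryCoset m H u := Quotient.exact hvu
    exact hUV (Set.mk_mem_prod hu hv) ((memIff u v).1 (hvc ▸ selfMem v))
  · -- continuity of g3
    have h3 : IsOpenQuotientMap (Prod.map π (Prod.map π π)) :=
      hoq.prodMap (hoq.prodMap hoq)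
    rw [h3.isQuotientMap.continuous_iff]
    have : ((fun p : _ × _ × _ => g3 p.1 p.2.1 p.2.2) ∘ Prod.map π (Prod.map π π)) =
        fun p : S × S × S => π (m p.1 p.2.1 p.2.2) := by
      funext p
      exact hg3 p.1 p.2.1 p.2.2
    rw [this]
    exact continuous_quotient_mk'.comp hm
  · -- continuity of j
    rw [hoq.isQuotientMap.continuous_iff]
    have : (j ∘ π) = fun x => π (inv x) := funext hj
    rw [this]
    exact continuous_quotient_mk'.comp hi
end
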